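/- arXiv:2604.08730 — 12 statements merged into one kernel-verified Lean document; each statement's English description precedes it below -/
import Mathlib

section
/- Let n ≥ 1, let p ≥ 1 be an integer, let a > 0, s > 0, and let b ∈ ℝⁿ with b_i > 0 for all i; set b_min = min_i b_i. Then: (a) if x ∈ ℝⁿ with all x_i > 0 satisfies a(∑_{j=1}^n x_j)^p + s·x_i^p = b_i for every i, then τ := a(∑_{j=1}^n x_j)^p satisfies 0 < τ < b_min, τ = H(τ), and x_i = ((b_i − τ)/s)^{1/p} for every i; (b) conversely, if τ ∈ (0, b_min) satisfies τ = H(τ), then the vector x defined by x_i = ((b_i − τ)/s)^{1/p} has all components strictly positive and satisfies a(∑_{j=1}^n x_j)^p + s·x_i^p = b_i for every i. -/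
lemma aux_rpow_inv_pow (x : ℝ) (hx : 0 ≤ x) (p : ℕ) (hp : p ≠ 0) :
    (x ^ ((1 : ℝ) / (p : ℝ))) ^ p = x := by
  rw [one_div, ← Real.rpow_natCast (x ^ _) p, ← Real.rpow_mul hx]
  rw [inv_mul_cancel₀ (by exact_mod_cast hp : (p : ℝ) ≠ 0), Real.rpow_one]

lemma aux_pow_rpow_inv (x : ℝ) (hx : 0 ≤ x) (p : ℕ) (hp : p ≠ 0) :
    (x ^ p : ℝ) ^ ((1 : ℝ) / (p : ℝ)) = x := by
  rw [one_div, ← Real.rpow_natCast x p, ← Real.rpow_mul hx]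
  rw [mul_inv_cancel₀ (by exact_mod_cast hp : (p : ℝ) ≠ 0), Real.rpow_one]

/-- Characterization of positive solutions of
`a(∑ x_j)^p + s x_i^p = b_i` via the scalar fixed-point equation `τ = H(τ)`,
`H(τ) = (a/s)(∑ (b_i − τ)^(1/p))^p`, with `τ = a(∑ x_j)^p ∈ (0, b_min)` and
`x_i = ((b_i − τ)/s)^(1/p)`. -/
theorem stmt_2 (n p : ℕ) (hn : 1 ≤ n) (hp : 1 ≤ p) (a s : ℝ) (ha : 0 < a) (hs : 0 < s)
    (b : Fin n → ℝ) (hb : ∀ i, 0 < b i) (bmin : ℝ) (hbmin : IsLeast (Set.range b) bmin) :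
    (∀ x : Fin n → ℝ, (∀ i, 0 < x i) →
      (∀ i, a * (∑ j, x j) ^ p + s * x i ^ p = b i) →
      0 < a * (∑ j, x j) ^ p ∧ a * (∑ j, x j) ^ p < bmin ∧
      a * (∑ j, x j) ^ p =
        (a / s) * (∑ i, (b i - a * (∑ j, x j) ^ p) ^ ((1 : ℝ) / (p : ℝ))) ^ p ∧
      ∀ i, x i = ((b i - a * (∑ j, x j) ^ p) / s) ^ ((1 : ℝ) / (p : ℝ))) ∧
    (∀ τ : ℝ, 0 < τ → τ < bmin →
      τ = (a / s) * (∑ i, (b i - τ) ^ ((1 : ℝ) / (p : ℝ))) ^ p →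
      (∀ i, 0 < ((b i - τ) / s) ^ ((1 : ℝ) / (p : ℝ))) ∧
      ∀ i, a * (∑ j, ((b j - τ) / s) ^ ((1 : ℝ) / (p : ℝ))) ^ p +
          s * (((b i - τ) / s) ^ ((1 : ℝ) / (p : ℝ))) ^ p = b i) := by
  have hp0 : p ≠ 0 := Nat.one_le_iff_ne_zero.mp hp
  have hsp : (s ^ ((1 : ℝ) / (p : ℝ))) ^ p = s := aux_rpow_inv_pow s hs.le p hp0
  have hsppos : 0 < s ^ ((1 : ℝ) / (p : ℝ)) := Real.rpow_pos_of_pos hs _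
  constructor
  · intro x hx heq
    set τ := a * (∑ j, x j) ^ p with hτdef
    have hsumpos : 0 < ∑ j, x j := by
      have : Nonempty (Fin n) := ⟨⟨0, hn⟩⟩
      exact Finset.sum_pos (fun i _ => hx i) Finset.univ_nonempty
    have hτpos : 0 < τ := mul_pos ha (pow_pos hsumpos p)
    have hdiff : ∀ i, b i - τ = s * x i ^ p := by
      intro i; have := heq i; linarith
    have hbi : ∀ i, τ < b i := by
      intro i
      have : 0 < b i - τ := by
        rw [hdiff i]; exact mul_pos hs (pow_pos (hx i) p)
      linarith
    have hτlt : τ < bmin := by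
      obtain ⟨i, hi⟩ := hbmin.1
      rw [← hi]; exact hbi i
    have hxval : ∀ i, x i = ((b i - τ) / s) ^ ((1 : ℝ) / (p : ℝ)) := by
      intro i
      rw [hdiff i, mul_div_cancel_left₀ _ hs.ne',
        aux_pow_rpow_inv _ (hx i).le p hp0]
    refine ⟨hτpos, hτlt, ?_, hxval⟩
    have hterm : ∀ i, (b i - τ) ^ ((1 : ℝ) / (p : ℝ)) = s ^ ((1 : ℝ) / (p : ℝ)) * x i := by
      intro i
      rw [hdiff i, Real.mul_rpow hs.le (pow_nonneg (hx i).le p),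
        aux_pow_rpow_inv _ (hx i).le p hp0]
    calc τ = (a / s) * (s * (∑ j, x j) ^ p) := by field_simp [hτdef]; ring
      _ = (a / s) * (∑ i, (b i - τ) ^ ((1 : ℝ) / (p : ℝ))) ^ p := by
          congr 1
          rw [Finset.sum_congr rfl (fun i _ => hterm i), ← Finset.mul_sum, mul_pow, hsp]
  · intro τ hτ0 hτlt hfix
    have hbτ : ∀ i, 0 < b i - τ := by
      intro i
      have : bmin ≤ b i := hbmin.2 ⟨i, rfl⟩
      linarith
    have hxpos : ∀ i, 0 < ((b i - τ) / s) ^ ((1 : ℝ) / (p : ℝ)) :=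
      fun i => Real.rpow_pos_of_pos (div_pos (hbτ i) hs) _
    refine ⟨hxpos, fun i => ?_⟩
    have hxp : (((b i - τ) / s) ^ ((1 : ℝ) / (p : ℝ))) ^ p = (b i - τ) / s :=
      aux_rpow_inv_pow _ (div_pos (hbτ i) hs).le p hp0
    have hsum : ∑ j, ((b j - τ) / s) ^ ((1 : ℝ) / (p : ℝ))
        = (∑ j, (b j - τ) ^ ((1 : ℝ) / (p : ℝ))) / s ^ ((1 : ℝ) / (p : ℝ)) := by
      rw [Finset.sum_div]
      exact Finset.sum_congr rfl fun j _ => Real.div_rpow (hbτ j).le hs.le _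
    have hkey : a * (∑ j, ((b j - τ) / s) ^ ((1 : ℝ) / (p : ℝ))) ^ p = τ := by
      rw [hsum, div_pow, hsp]
      conv_rhs => rw [hfix]
      ring
    rw [hkey, hxp]
    have : s * ((b i - τ) / s) = b i - τ := by field_simp
    linarith
end

section
/- Let n ≥ 1, let p ≥ 1 be an integer, let a > 0, s > 0, and let b ∈ ℝⁿ with b_i > 0 for all i. If x and y are two vectors in ℝⁿ with all components strictly positive, both satisfying a(∑_{j=1}^n x_j)^p + s·x_i^p = b_i and a(∑_{j=1}^n y_j)^p + s·y_i^p = b_i for every i, then x = y. That is, the system has at most one positive solution. -/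
private lemma stmt3_aux (n p : ℕ) (hp : 1 ≤ p) (a s : ℝ) (ha : 0 < a) (hs : 0 < s)
    (b : Fin n → ℝ)
    (x y : Fin n → ℝ) (hx : ∀ i, 0 < x i) (hy : ∀ i, 0 < y i)
    (hxeq : ∀ i, a * (∑ j, x j) ^ p + s * x i ^ p = b i)
    (hyeq : ∀ i, a * (∑ j, y j) ^ p + s * y i ^ p = b i)
    (hS : (∑ j, x j) ≤ (∑ j, y j)) : ∀ i, y i ≤ x i := by
  intro i
  have hSx : (0:ℝ) ≤ ∑ j, x j := Finset.sum_nonneg fun j _ => (hx j).le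
  have hSp : (∑ j, x j) ^ p ≤ (∑ j, y j) ^ p := pow_le_pow_left₀ hSx hS p
  have h1 : s * y i ^ p ≤ s * x i ^ p := by nlinarith [hxeq i, hyeq i]
  have h2 : y i ^ p ≤ x i ^ p := le_of_mul_le_mul_left h1 hs
  by_contra h
  push_neg at h
  have := pow_lt_pow_left₀ h (hx i).le (by omega : p ≠ 0)
  linarith

/-- The system `a(∑ x_j)^p + s x_i^p = b_i` (a, s > 0, b positive)
has at most one positive solution. -/
theorem stmt_3 (n p : ℕ) (hn : 1 ≤ n) (hp : 1 ≤ p) (a s : ℝ) (ha : 0 < a) (hs : 0 < s)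
    (b : Fin n → ℝ) (hb : ∀ i, 0 < b i)
    (x y : Fin n → ℝ) (hx : ∀ i, 0 < x i) (hy : ∀ i, 0 < y i)
    (hxeq : ∀ i, a * (∑ j, x j) ^ p + s * x i ^ p = b i)
    (hyeq : ∀ i, a * (∑ j, y j) ^ p + s * y i ^ p = b i) :
    x = y := by
  have key : ∀ i, x i = y i := by
    rcases le_total (∑ j, x j) (∑ j, y j) with hS | hS
    · have h1 := stmt3_aux n p hp a s ha hs b x y hx hy hxeq hyeq hS
      have h2 : (∑ j, y j) ≤ ∑ j, x j := Finset.sum_le_sum fun j _ => h1 j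
      have hSeq : (∑ j, x j) = ∑ j, y j := le_antisymm hS h2
      intro i
      have hpe : x i ^ p = y i ^ p := by
        have e1 := hxeq i; have e2 := hyeq i
        rw [hSeq] at e1
        nlinarith
      rcases lt_trichotomy (x i) (y i) with h|h|h
      · exact absurd hpe (ne_of_lt (pow_lt_pow_left₀ h (hx i).le (by omega)))
      · exact h
      · exact absurd hpe.symm (ne_of_lt (pow_lt_pow_left₀ h (hy i).le (by omega)))
    · have h1 := stmt3_aux n p hp a s ha hs b y x hy hx hyeq hxeq hS
      have h2 : (∑ j, x j) ≤ ∑ j, y j := Finset.sum_le_sum fun j _ => h1 j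
      have hSeq : (∑ j, x j) = ∑ j, y j := le_antisymm h2 hS
      intro i
      have hpe : x i ^ p = y i ^ p := by
        have e1 := hxeq i; have e2 := hyeq i
        rw [hSeq] at e1
        nlinarith
      rcases lt_trichotomy (x i) (y i) with h|h|h
      · exact absurd hpe (ne_of_lt (pow_lt_pow_left₀ h (hx i).le (by omega)))
      · exact h
      · exact absurd hpe.symm (ne_of_lt (pow_lt_pow_left₀ h (hy i).le (by omega)))
  funext i; exact key i
end

section
/- Let n ≥ 1, let p ≥ 1 be an integer, let a > 0, s > 0, and let b ∈ ℝⁿ with b_i > 0 for all i; set b_min = min_i b_i. Then there exists x ∈ ℝⁿ with all components strictly positive satisfying a(∑_{j=1}^n x_j)^p + s·x_i^p = b_i for every i, if and only if (a/s)·(∑_{i=1}^n (b_i − b_min)^{1/p})^p < b_min. -/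
/-- The system `a(∑ x_j)^p + s x_i^p = b_i` has a positive solution iff
`(a/s)(∑ (b_i − b_min)^(1/p))^p < b_min`. -/
theorem stmt_4 (n p : ℕ) (hn : 1 ≤ n) (hp : 1 ≤ p) (a s : ℝ) (ha : 0 < a) (hs : 0 < s)
    (b : Fin n → ℝ) (hb : ∀ i, 0 < b i) (bmin : ℝ) (hbmin : IsLeast (Set.range b) bmin) :
    (∃ x : Fin n → ℝ, (∀ i, 0 < x i) ∧
        ∀ i, a * (∑ j, x j) ^ p + s * x i ^ p = b i) ↔
      (a / s) * (∑ i, (b i - bmin) ^ ((1 : ℝ) / (p : ℝ))) ^ p < bmin := by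
  obtain ⟨⟨i0, hi0⟩, hble⟩ := hbmin
  have hple : ∀ i, bmin ≤ b i := fun i => hble ⟨i, rfl⟩
  have hc : 0 < bmin := hi0 ▸ hb i0
  have hne : (Finset.univ : Finset (Fin n)).Nonempty := ⟨⟨0, hn⟩, Finset.mem_univ _⟩
  have hp0 : p ≠ 0 := by omega
  have hpR : (0:ℝ) < p := by exact_mod_cast Nat.pos_of_ne_zero hp0
  set q : ℝ := (1:ℝ) / p with hqdef
  have hq : 0 < q := by positivity
  have key1 : ∀ x : ℝ, 0 ≤ x → (x ^ q) ^ p = x := by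
    intro x hx
    rw [← Real.rpow_natCast (x ^ q) p, ← Real.rpow_mul hx, hqdef,
      one_div, inv_mul_cancel₀ (ne_of_gt hpR), Real.rpow_one]
  have key2 : ∀ x : ℝ, 0 ≤ x → ((x ^ p : ℝ)) ^ q = x := by
    intro x hx
    rw [← Real.rpow_natCast x p, ← Real.rpow_mul hx, hqdef, mul_one_div,
      div_self (ne_of_gt hpR), Real.rpow_one]
  set T0 : ℝ := (bmin / a) ^ q with hT0def
  have hT0pos : 0 < T0 := Real.rpow_pos_of_pos (by positivity) q
  have hT0p : a * T0 ^ p = bmin := by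
    rw [hT0def, key1 _ (le_of_lt (by positivity)), mul_div_cancel₀ _ (ne_of_gt ha)]
  set f : ℝ → ℝ := fun t => ∑ i, ((b i - a * t ^ p) / s) ^ q with hfdef
  have hfcont : Continuous f := by
    apply continuous_finset_sum
    intro i _
    have h1 : Continuous fun y : ℝ => y ^ q :=
      continuous_iff_continuousAt.2 fun x => Real.continuousAt_rpow_const x q (Or.inr hq.le)
    exact h1.comp ((continuous_const.sub (continuous_const.mul (continuous_pow p))).div_const s)
  set S : ℝ := ∑ i, (b i - bmin) ^ q with hSdef
  have hS_nonneg : 0 ≤ S :=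
    Finset.sum_nonneg fun i _ => Real.rpow_nonneg (by linarith [hple i]) q
  have hfT0 : f T0 = S / s ^ q := by
    rw [hfdef, hSdef]
    simp only [hT0p]
    rw [Finset.sum_div]
    refine Finset.sum_congr rfl fun i _ => ?_
    rw [Real.div_rpow (by linarith [hple i]) hs.le]
  have hcond : f T0 < T0 ↔ (a / s) * S ^ p < bmin := by
    rw [hfT0]
    have hsq : (0:ℝ) < s ^ q := Real.rpow_pos_of_pos hs q
    constructor
    · intro h
      have h2 : (S / s ^ q) ^ p < T0 ^ p := pow_lt_pow_left₀ h (by positivity) hp0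
      rw [div_pow, key1 _ hs.le] at h2
      have h3 : a * (S ^ p / s) < a * T0 ^ p := by
        exact (mul_lt_mul_iff_right₀ ha).2 h2
      rw [hT0p] at h3
      calc (a / s) * S ^ p = a * (S ^ p / s) := by ring
        _ < bmin := h3
    · intro h
      rw [div_mul_eq_mul_div, div_lt_iff₀ hs] at h
      have hT0p' : T0 ^ p = bmin / a := by
        rw [eq_div_iff (ne_of_gt ha)]; linarith [hT0p]
      have h2 : (S / s ^ q) ^ p < T0 ^ p := by
        rw [div_pow, key1 _ hs.le, hT0p', div_lt_div_iff₀ hs ha]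
        nlinarith
      exact lt_of_pow_lt_pow_left₀ p hT0pos.le h2
  rw [← hcond]
  constructor
  · -- forward: solution exists → f T0 < T0
    rintro ⟨x, hx, heq⟩
    set T : ℝ := ∑ j, x j with hTdef
    have hT : 0 < T := Finset.sum_pos (fun i _ => hx i) hne
    have haT : a * T ^ p < bmin := by
      have := heq i0
      rw [hi0] at this
      nlinarith [pow_pos (hx i0) p]
    have hTlt : T < T0 := by
      apply lt_of_pow_lt_pow_left₀ p hT0pos.le
      have : a * T ^ p < a * T0 ^ p := by rw [hT0p]; exact haT
      exact lt_of_mul_lt_mul_left this ha.le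
    have hx_eq : ∀ i, x i = ((b i - a * T ^ p) / s) ^ q := by
      intro i
      have h1 : (x i) ^ p = (b i - a * T ^ p) / s := by
        field_simp
        linarith [heq i]
      rw [← h1, key2 _ (hx i).le]
    have hfT : f T = T := by
      exact (Finset.sum_congr rfl fun i _ => (hx_eq i).symm).trans hTdef.symm
    have hstep : f T0 < f T := by
      rw [hfdef]
      apply Finset.sum_lt_sum_of_nonempty hne
      intro i _
      apply Real.rpow_lt_rpow
      · have h5 : a * T0 ^ p ≤ b i := by rw [hT0p]; exact hple i
        exact div_nonneg (by linarith) hs.le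
      · have h4 : a * T ^ p < a * T0 ^ p :=
          (mul_lt_mul_iff_right₀ ha).2 (pow_lt_pow_left₀ hTlt hT.le hp0)
        apply div_lt_div_of_pos_right ?_ hs
        linarith
      · exact hq
    calc f T0 < f T := hstep
      _ = T := hfT
      _ < T0 := hTlt
  · -- backward: f T0 < T0 → solution exists
    intro hlt
    set g : ℝ → ℝ := fun t => f t - t with hgdef
    have hgcont : Continuous g := hfcont.sub continuous_id
    have hg0 : 0 < g 0 := by
      rw [hgdef]
      simp only [sub_zero]
      rw [hfdef]
      simp only [zero_pow hp0, mul_zero, sub_zero]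
      apply Finset.sum_pos (fun i _ => Real.rpow_pos_of_pos (div_pos (hb i) hs) q) hne
    have hgT0 : g T0 < 0 := by rw [hgdef]; simp only; linarith
    have hmem : (0:ℝ) ∈ g '' Set.Icc 0 T0 := by
      apply intermediate_value_Icc' hT0pos.le hgcont.continuousOn
      exact ⟨hgT0.le, hg0.le⟩
    obtain ⟨t, htmem, htg⟩ := hmem
    obtain ⟨ht0, htT0⟩ := htmem
    have hft : f t = t := by
      have : f t - t = 0 := htg
      linarith
    have htpos : 0 < t := by
      rcases lt_or_eq_of_le ht0 with h | h
      · exact h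
      · exfalso; rw [← h] at htg; linarith
    have htlt : t < T0 := by
      rcases lt_or_eq_of_le htT0 with h | h
      · exact h
      · exfalso; rw [h] at htg; linarith
    have hnum : ∀ i, 0 < b i - a * t ^ p := by
      intro i
      have h1 : t ^ p < T0 ^ p := pow_lt_pow_left₀ htlt ht0 hp0
      have h2 : a * t ^ p < a * T0 ^ p := (mul_lt_mul_iff_right₀ ha).2 h1
      rw [hT0p] at h2
      linarith [hple i]
    refine ⟨fun i => ((b i - a * t ^ p) / s) ^ q, fun i => Real.rpow_pos_of_pos (div_pos (hnum i) hs) q, ?_⟩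
    intro i
    have hsum : (∑ j, ((b j - a * t ^ p) / s) ^ q) = t := hft
    rw [hsum, key1 _ (div_pos (hnum i) hs).le]
    field_simp
    ring
end

section
/- Let n ≥ 1, let p ≥ 1 be an integer, let a > 0, s > 0, and let b ∈ ℝⁿ with b_i > 0 for all i; set b_min = min_i b_i and b_max = max_i b_i. If a·n^p·(b_max − b_min) < s·b_min, then there exists x ∈ ℝⁿ with all components strictly positive satisfying a(∑_{j=1}^n x_j)^p + s·x_i^p = b_i for every i. -/
/-- If `a n^p (b_max − b_min) < s b_min`, then the system
`a(∑ x_j)^p + s x_i^p = b_i` has a positive solution. -/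
theorem stmt_5 (n p : ℕ) (hn : 1 ≤ n) (hp : 1 ≤ p) (a s : ℝ) (ha : 0 < a) (hs : 0 < s)
    (b : Fin n → ℝ) (hb : ∀ i, 0 < b i)
    (bmin bmax : ℝ) (hbmin : IsLeast (Set.range b) bmin)
    (hbmax : IsGreatest (Set.range b) bmax)
    (hcond : a * (n : ℝ) ^ p * (bmax - bmin) < s * bmin) :
    ∃ x : Fin n → ℝ, (∀ i, 0 < x i) ∧
      ∀ i, a * (∑ j, x j) ^ p + s * x i ^ p = b i := by
  have hp0 : p ≠ 0 := by omega
  have hP : (0:ℝ) < p := by exact_mod_cast Nat.pos_of_ne_zero hp0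
  have hne : Nonempty (Fin n) := ⟨⟨0, hn⟩⟩
  have hn0 : (0:ℝ) < n := by exact_mod_cast hn
  obtain ⟨imin, himin⟩ := hbmin.1
  have hbmin_pos : 0 < bmin := himin ▸ hb imin
  have hbmin_le : ∀ i, bmin ≤ b i := fun i => hbmin.2 ⟨i, rfl⟩
  have hble_max : ∀ i, b i ≤ bmax := fun i => hbmax.2 ⟨i, rfl⟩
  have hminmax : bmin ≤ bmax := le_trans (hbmin_le imin) (hble_max imin)
  set q : ℝ := 1 / (p:ℝ) with hqdef
  have hq : 0 < q := by positivity
  have hqp : q * (p:ℝ) = 1 := by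
    rw [hqdef, one_div, inv_mul_cancel₀ (ne_of_gt hP)]
  have root_pow : ∀ c : ℝ, 0 ≤ c → (c ^ q) ^ p = c := by
    intro c hc
    rw [← Real.rpow_natCast (c ^ q) p, ← Real.rpow_mul hc, hqp, Real.rpow_one]
  set tstar : ℝ := (bmin / a) ^ q with htsdef
  have hts_pos : 0 < tstar := Real.rpow_pos_of_pos (by positivity) q
  have hts_pow : tstar ^ p = bmin / a := root_pow _ (by positivity)
  set g : ℝ → ℝ := fun t => ∑ i, ((b i - a * t ^ p) / s) ^ q with hgdef
  have hgcont : Continuous g := by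
    apply continuous_finset_sum
    intro i _
    exact Continuous.rpow_const (by continuity) (fun x => Or.inr hq.le)
  have hcont : ContinuousOn (fun t => g t - t) (Set.Icc 0 tstar) :=
    (hgcont.sub continuous_id).continuousOn
  have hg0 : (0:ℝ) < g 0 - 0 := by
    have h1 : 0 < g 0 := by
      apply Finset.sum_pos _ Finset.univ_nonempty
      intro i _
      apply Real.rpow_pos_of_pos
      have hz : (0:ℝ)^p = 0 := zero_pow hp0
      rw [hz, mul_zero, sub_zero]
      have := hb i
      positivity
    linarith
  have hats : a * tstar ^ p = bmin := by
    rw [hts_pow]; field_simp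
  have hgtstar : g tstar - tstar < 0 := by
    have hsum_le : g tstar ≤ (n:ℝ) * ((bmax - bmin) / s) ^ q := by
      have h2 : g tstar ≤ ∑ _i : Fin n, ((bmax - bmin) / s) ^ q := by
        apply Finset.sum_le_sum
        intro i _
        apply Real.rpow_le_rpow
        · rw [hats]
          exact div_nonneg (by linarith [hbmin_le i]) hs.le
        · rw [hats]
          gcongr
          · linarith [hble_max i]
        · exact hq.le
      simpa using h2
    have hkey : (n:ℝ) * ((bmax - bmin) / s) ^ q < tstar := by
      have h3 : ((n:ℝ)^p * ((bmax - bmin)/s)) < bmin / a := by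
        rw [← mul_div_assoc, div_lt_div_iff₀ hs ha]
        nlinarith [hcond]
      have hc0 : (0:ℝ) ≤ (bmax - bmin)/s := div_nonneg (by linarith) hs.le
      have h4 : (((n:ℝ)^p * ((bmax - bmin)/s)) ^ q) < (bmin / a) ^ q :=
        Real.rpow_lt_rpow (mul_nonneg (by positivity) hc0) h3 hq
      have h5 : (((n:ℝ)^p * ((bmax - bmin)/s)) ^ q)
          = (n:ℝ) * ((bmax - bmin)/s) ^ q := by
        rw [Real.mul_rpow (by positivity) hc0,
          ← Real.rpow_natCast (n:ℝ) p, ← Real.rpow_mul (by positivity)]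
        rw [mul_comm (p:ℝ) q, hqp, Real.rpow_one]
      rw [← h5]
      exact h4
    linarith
  have hsub : Set.Ioo ((fun t => g t - t) tstar) ((fun t => g t - t) 0)
      ⊆ (fun t => g t - t) '' Set.Ioo 0 tstar :=
    intermediate_value_Ioo' hts_pos.le hcont
  obtain ⟨t, ht, hteq⟩ := hsub ⟨hgtstar, hg0⟩
  have ht0 : 0 < t := ht.1
  have htlt : t < tstar := ht.2
  have hgt : g t = t := by
    have := hteq
    simp only at this
    linarith
  have hpow_lt : a * t ^ p < bmin := by
    have : t ^ p < tstar ^ p := pow_lt_pow_left₀ htlt ht0.le hp0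
    rw [hts_pow] at this
    calc a * t ^ p < a * (bmin / a) := by nlinarith
    _ = bmin := by field_simp
  refine ⟨fun i => ((b i - a * t ^ p) / s) ^ q, ?_, ?_⟩
  · intro i
    apply Real.rpow_pos_of_pos
    have := hbmin_le i
    have : 0 < b i - a * t ^ p := by linarith
    positivity
  · intro i
    have hsum : (∑ j, ((b j - a * t ^ p) / s) ^ q) = t := hgt
    rw [hsum, root_pow _ (by
      have := hbmin_le i
      have : 0 < b i - a * t ^ p := by linarith
      positivity)]
    field_simp
    ring
end

section
/- Let n ≥ 1, let p ≥ 1 be an integer, let a > 0, s > 0, and let b ∈ ℝⁿ with b_i > 0 for all i; set b_min = min_i b_i and b_max = max_i b_i. If x ∈ ℝⁿ with all components strictly positive satisfies a(∑_{j=1}^n x_j)^p + s·x_i^p = b_i for every i, then the quantity τ := a(∑_{j=1}^n x_j)^p satisfies a·n^p·b_min/(s + a·n^p) ≤ τ ≤ a·n^p·b_max/(s + a·n^p). -/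
/-- For any positive solution of `a(∑ x_j)^p + s x_i^p = b_i`,
the quantity `τ = a(∑ x_j)^p` satisfies
`a n^p b_min/(s + a n^p) ≤ τ ≤ a n^p b_max/(s + a n^p)`. -/
theorem stmt_6 (n p : ℕ) (hn : 1 ≤ n) (hp : 1 ≤ p) (a s : ℝ) (ha : 0 < a) (hs : 0 < s)
    (b : Fin n → ℝ) (hb : ∀ i, 0 < b i)
    (bmin bmax : ℝ) (hbmin : IsLeast (Set.range b) bmin)
    (hbmax : IsGreatest (Set.range b) bmax)
    (x : Fin n → ℝ) (hx : ∀ i, 0 < x i)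
    (heq : ∀ i, a * (∑ j, x j) ^ p + s * x i ^ p = b i) :
    a * (n : ℝ) ^ p * bmin / (s + a * (n : ℝ) ^ p) ≤ a * (∑ j, x j) ^ p ∧
      a * (∑ j, x j) ^ p ≤ a * (n : ℝ) ^ p * bmax / (s + a * (n : ℝ) ^ p) := by
  have hp0 : p ≠ 0 := by omega
  set S : ℝ := ∑ j, x j with hSdef
  have hnR : (1 : ℝ) ≤ (n : ℝ) := by exact_mod_cast hn
  have hnp : (0 : ℝ) < (n : ℝ) ^ p := by positivity
  have hden : (0 : ℝ) < s + a * (n : ℝ) ^ p := by positivity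
  obtain ⟨i0, hi0⟩ := hbmin.1
  obtain ⟨i1, hi1⟩ := hbmax.1
  -- x i0 is the minimum, x i1 is the maximum
  have hmono : ∀ i j : Fin n, b i ≤ b j → x i ≤ x j := by
    intro i j hij
    have h1 := heq i
    have h2 := heq j
    have hpow : x i ^ p ≤ x j ^ p := by nlinarith
    exact le_of_pow_le_pow_left₀ hp0 (hx j).le hpow
  have hmin : ∀ i, x i0 ≤ x i := fun i =>
    hmono i0 i (hi0 ▸ hbmin.2 ⟨i, rfl⟩)
  have hmax : ∀ i, x i ≤ x i1 := fun i =>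
    hmono i i1 (hi1 ▸ hbmax.2 ⟨i, rfl⟩)
  have hSlo : (n : ℝ) * x i0 ≤ S := by
    calc (n : ℝ) * x i0 = ∑ _j : Fin n, x i0 := by
          simp [Finset.sum_const, mul_comm]
      _ ≤ S := Finset.sum_le_sum fun i _ => hmin i
  have hShi : S ≤ (n : ℝ) * x i1 := by
    calc S ≤ ∑ _j : Fin n, x i1 := Finset.sum_le_sum fun i _ => hmax i
      _ = (n : ℝ) * x i1 := by simp [Finset.sum_const, mul_comm]
  have hx0 : 0 < x i0 := hx i0
  have hSpos : 0 < S := lt_of_lt_of_le (by positivity) hSlo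
  have hSplo : ((n : ℝ) * x i0) ^ p ≤ S ^ p :=
    pow_le_pow_left₀ (by positivity) hSlo p
  have hSphi : S ^ p ≤ ((n : ℝ) * x i1) ^ p :=
    pow_le_pow_left₀ hSpos.le hShi p
  rw [mul_pow] at hSplo hSphi
  have e0 := heq i0
  have e1 := heq i1
  rw [hi0] at e0
  rw [hi1] at e1
  constructor
  · rw [div_le_iff₀ hden]
    nlinarith [mul_le_mul_of_nonneg_left hSplo (mul_pos ha hs).le]
  · rw [le_div_iff₀ hden]
    nlinarith [mul_le_mul_of_nonneg_left hSphi (mul_pos ha hs).le]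
end

section
/- Let n ≥ 1, let 0 < k < 1, and let z ∈ ℝⁿ with z_i > 0 for all i; set r = ∑_{i=1}^n z_i. Define t ∈ ℝⁿ by t_i = −2kr·z_i and the n×n real matrix J = t𝟏ᵀ + 2(k−1)·diag(z_1², …, z_n²) (i.e., J_{ij} = t_i for j ≠ i and J_{ii} = t_i + 2(k−1)z_i²). Then every complex eigenvalue of J has strictly negative real part (J is Hurwitz). -/
/-- For `0 < k < 1` and positive `z` with `r = ∑ z_i`, the Jacobian
`J = t𝟏ᵀ + 2(k−1)diag(z_i²)` with `t_i = −2kr z_i` is Hurwitz: every complex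
eigenvalue has strictly negative real part. -/
theorem stmt_9 (n : ℕ) (hn : 1 ≤ n) (k : ℝ) (hk0 : 0 < k) (hk1 : k < 1)
    (z : Fin n → ℝ) (hz : ∀ i, 0 < z i)
    (J : Matrix (Fin n) (Fin n) ℝ)
    (hJ : ∀ i j, J i j =
      -(2 * k * (∑ l, z l) * z i) + (if i = j then 2 * (k - 1) * z i ^ 2 else 0)) :
    ∀ μ : ℂ, (∃ v : Fin n → ℂ, v ≠ 0 ∧
        (J.map (fun x : ℝ => (x : ℂ))).mulVec v = μ • v) → μ.re < 0 := by
  rintro μ ⟨v, hv, hev⟩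
  obtain ⟨i0, hi0⟩ := Function.ne_iff.mp hv
  set r : ℝ := ∑ l, z l with hr
  have hzne : ∀ i, (z i : ℂ) ≠ 0 := fun i => by exact_mod_cast (hz i).ne'
  have ha : 0 < 2 * k * r := by
    have : 0 < r := Finset.sum_pos (fun i _ => hz i) ⟨⟨0, hn⟩, Finset.mem_univ _⟩
    positivity
  have heq : ∀ i, (∑ j, (J i j : ℂ) * v j) = μ * v i := by
    intro i
    have h := congrFun hev i
    simpa [Matrix.mulVec, dotProduct, Matrix.map_apply, Pi.smul_apply,
      smul_eq_mul] using h
  set S : ℂ := ∑ j, v j with hS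
  have hrow : ∀ i, (∑ j, (J i j : ℂ) * v j)
      = -((2*k*r*z i : ℝ) : ℂ) * S + ((2*(k-1)*z i^2 : ℝ) : ℂ) * v i := by
    intro i
    have hterm : ∀ j, (J i j : ℂ) * v j
        = -((2*k*r*z i : ℝ) : ℂ) * v j
          + (if i = j then ((2*(k-1)*z i^2 : ℝ) : ℂ) * v j else 0) := by
      intro j
      rw [hJ i j]
      split <;> (push_cast; ring)
    rw [Finset.sum_congr rfl fun j _ => hterm j, Finset.sum_add_distrib,
      ← Finset.mul_sum, Finset.sum_ite_eq]
    simp [hS]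
  set P : ℝ := ∑ i, Complex.normSq (v i) / z i with hP
  set Q : ℝ := ∑ i, 2*(1-k)*(z i)^2 * Complex.normSq (v i) / z i with hQ
  have hPpos : 0 < P := by
    apply Finset.sum_pos'
    · intro i _
      have := Complex.normSq_nonneg (v i)
      have := hz i
      positivity
    · refine ⟨i0, Finset.mem_univ _, ?_⟩
      have h0 : 0 < Complex.normSq (v i0) := Complex.normSq_pos.mpr (by simpa using hi0)
      have := hz i0
      positivity
  have hQpos : 0 < Q := by
    apply Finset.sum_pos'
    · intro i _
      have := Complex.normSq_nonneg (v i)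
      have h1k : 0 ≤ 1 - k := by linarith
      have := hz i
      positivity
    · refine ⟨i0, Finset.mem_univ _, ?_⟩
      have h0 : 0 < Complex.normSq (v i0) := Complex.normSq_pos.mpr (by simpa using hi0)
      have h1k : 0 < 1 - k := by linarith
      have := hz i0
      positivity
  have key : μ * (P : ℂ) = ((-(2*k*r) * Complex.normSq S - Q : ℝ) : ℂ) := by
    have hterm : ∀ i, μ * ((Complex.normSq (v i) : ℂ) / (z i : ℂ))
        = -((2*k*r : ℝ) : ℂ) * ((starRingEnd ℂ) (v i)) * S
          - ((2*(1-k)*(z i)^2 * Complex.normSq (v i) / z i : ℝ) : ℂ) := by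
      intro i
      have h1 : μ * v i = -((2*k*r*z i : ℝ) : ℂ) * S + ((2*(k-1)*z i^2 : ℝ) : ℂ) * v i := by
        rw [← heq i, hrow i]
      have hns : ((Complex.normSq (v i) : ℂ)) = (starRingEnd ℂ) (v i) * v i :=
        Complex.normSq_eq_conj_mul_self
      push_cast at h1 ⊢
      rw [hns]
      field_simp [hzne i]
      linear_combination ((starRingEnd ℂ) (v i)) * h1
    have hPc : (P : ℂ) = ∑ i, ((Complex.normSq (v i) : ℂ) / (z i : ℂ)) := by
      rw [hP]; push_cast; exact Finset.sum_congr rfl fun x _ => by ring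
    rw [hPc, Finset.mul_sum, Finset.sum_congr rfl fun i _ => hterm i,
      Finset.sum_sub_distrib]
    have h2 : (∑ i, -((2*k*r : ℝ) : ℂ) * ((starRingEnd ℂ) (v i)) * S)
        = -((2*k*r : ℝ) : ℂ) * ((Complex.normSq S : ℝ) : ℂ) := by
      rw [← Finset.sum_mul]
      have : (∑ i, -((2*k*r : ℝ) : ℂ) * ((starRingEnd ℂ) (v i)))
          = -((2*k*r : ℝ) : ℂ) * ((starRingEnd ℂ) S) := by
        rw [← Finset.mul_sum, hS, map_sum]
      rw [this, mul_assoc, ← Complex.normSq_eq_conj_mul_self]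
    have h3 : (∑ i, ((2*(1-k)*(z i)^2 * Complex.normSq (v i) / z i : ℝ) : ℂ)) = ((Q : ℝ) : ℂ) := by
      rw [hQ]; push_cast; exact Finset.sum_congr rfl fun x _ => by ring
    rw [h2, h3]
    push_cast
    ring
  have hre : μ.re * P = -(2*k*r) * Complex.normSq S - Q := by
    have := congrArg Complex.re key
    simpa [Complex.mul_re] using this
  nlinarith [Complex.normSq_nonneg S, mul_nonneg ha.le (Complex.normSq_nonneg S)]
end

section
/- Let n ≥ 1, let k > 0 satisfy k(n² − 1) < 1, and let w ∈ ℝⁿ with w_i ≥ 0 for all i. Suppose z* ∈ ℝⁿ has all components strictly positive and satisfies k(∑_{j=1}^n z*_j)² + (1−k)(z*_i)² = 1 + w_i for every i (i.e., z* is an all-neurons-coexistence equilibrium). Let z : [0,∞) → ℝⁿ be differentiable with z_i(t) > 0 for all i and all t ≥ 0, satisfying dz_i/dt(t) = z_i(t)·(1 + w_i − k·(∑_{j=1}^n z_j(t))² + (k−1)·z_i(t)²) for all t ≥ 0 and all i. Then z(t) → z* as t → ∞. -/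
open Real

lemma lyap_flip (a x : ℝ) : Real.log (x / a) = - Real.log (a / x) := by
  rw [← Real.log_inv, inv_div]

lemma lyap_nonneg {a x : ℝ} (ha : 0 < a) (hx : 0 < x) :
    0 ≤ x - a - a * Real.log (x / a) := by
  have h := Real.log_le_sub_one_of_pos (div_pos hx ha)
  have h2 : a * Real.log (x / a) ≤ a * (x / a - 1) :=
    mul_le_mul_of_nonneg_left h ha.le
  have h3 : a * (x / a - 1) = x - a := by field_simp
  linarith

lemma lyap_le {a x : ℝ} (ha : 0 < a) (hx : 0 < x) :
    x - a - a * Real.log (x / a) ≤ (x - a) ^ 2 / x := by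
  have h := Real.log_le_sub_one_of_pos (div_pos ha hx)
  have h2 : a * Real.log (a / x) ≤ a * (a / x - 1) :=
    mul_le_mul_of_nonneg_left h ha.le
  rw [lyap_flip]
  have h3 : x - a + a * (a / x - 1) = (x - a) ^ 2 / x := by field_simp; ring
  linarith

lemma lyap_sq_le {a x : ℝ} (ha : 0 < a) (hx : 0 < x) :
    (Real.sqrt x - Real.sqrt a) ^ 2 ≤ x - a - a * Real.log (x / a) := by
  have hd : (0:ℝ) < x / a := div_pos hx ha
  have h2 : Real.log (Real.sqrt (x / a)) ≤ Real.sqrt (x / a) - 1 :=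
    Real.log_le_sub_one_of_pos (Real.sqrt_pos.mpr hd)
  have hsa : Real.sqrt a > 0 := Real.sqrt_pos.mpr ha
  have hsx : (0:ℝ) ≤ Real.sqrt x := Real.sqrt_nonneg x
  have hax : Real.sqrt a * Real.sqrt a = a := Real.mul_self_sqrt ha.le
  have hxx : Real.sqrt x * Real.sqrt x = x := Real.mul_self_sqrt hx.le
  have h4 : a * Real.log (x / a) ≤ 2 * (Real.sqrt a * Real.sqrt x) - 2 * a := by
    have h1 : a * Real.log (x / a) = 2 * a * Real.log (Real.sqrt (x / a)) := by
      rw [Real.log_sqrt hd.le]; ring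
    rw [h1]
    have h3 : Real.sqrt (x / a) = Real.sqrt x / Real.sqrt a := Real.sqrt_div hx.le a
    have h5 : 2 * a * Real.log (Real.sqrt (x / a)) ≤ 2 * a * (Real.sqrt x / Real.sqrt a - 1) := by
      rw [h3] at h2 ⊢
      nlinarith
    have h6 : 2 * a * (Real.sqrt x / Real.sqrt a - 1) = 2 * (Real.sqrt a * Real.sqrt x) - 2 * a := by
      field_simp
      nlinarith
    linarith
  nlinarith

lemma lyap_lb_log {a x : ℝ} (ha : 0 < a) (hx : 0 < x) :
    a * Real.log (a / x) - a ≤ x - a - a * Real.log (x / a) := by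
  rw [lyap_flip]
  linarith

/-- Global asymptotic stability of the all-neurons-coexistence equilibrium
of the 3-uniform higher-order Lotka–Volterra system when `k(n²−1) < 1`:
every strictly positive trajectory converges to the positive equilibrium `z*`. -/
theorem stmt_11 (n : ℕ) (hn : 1 ≤ n) (k : ℝ) (hk0 : 0 < k)
    (hk : k * ((n : ℝ) ^ 2 - 1) < 1)
    (w : Fin n → ℝ) (hw : ∀ i, 0 ≤ w i)
    (zstar : Fin n → ℝ) (hzstar : ∀ i, 0 < zstar i)
    (heq : ∀ i, k * (∑ j, zstar j) ^ 2 + (1 - k) * zstar i ^ 2 = 1 + w i)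
    (z : ℝ → Fin n → ℝ)
    (hpos : ∀ t ≥ (0 : ℝ), ∀ i, 0 < z t i)
    (hode : ∀ t ≥ (0 : ℝ), ∀ i, HasDerivAt (fun s => z s i)
      (z t i * (1 + w i - k * (∑ j, z t j) ^ 2 + (k - 1) * z t i ^ 2)) t) :
    Filter.Tendsto z Filter.atTop (nhds zstar) := by
  classical
  haveI : NeZero n := ⟨by omega⟩
  have hne : (Finset.univ : Finset (Fin n)).Nonempty :=
    Finset.univ_nonempty
  set V : ℝ → ℝ := fun t => ∑ i, (z t i - zstar i - zstar i * Real.log (z t i / zstar i))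
    with hVdef
  set sstar : ℝ := ∑ j, zstar j with hsstar
  have hsspos : 0 < sstar := Finset.sum_pos (fun i _ => hzstar i) hne
  have hSpos : ∀ t ≥ (0:ℝ), 0 < ∑ j, z t j :=
    fun t ht => Finset.sum_pos (fun i _ => hpos t ht i) hne
  set D : ℝ → ℝ := fun t => -(k * ((∑ j, z t j) - sstar) ^ 2 * ((∑ j, z t j) + sstar))
      - (1 - k) * ∑ i, (z t i - zstar i) ^ 2 * (z t i + zstar i) with hDdef
  -- derivative of the Lyapunov function along the flow
  have hV' : ∀ t ≥ (0:ℝ), HasDerivAt V (D t) t := by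
    intro t ht
    have h1 : HasDerivAt V
        (∑ i, (z t i - zstar i) * (1 + w i - k * (∑ j, z t j) ^ 2 + (k - 1) * z t i ^ 2)) t := by
      simp only [hVdef]
      apply HasDerivAt.fun_sum
      intro i _
      have hzi := hode t ht i
      have hzp := hpos t ht i
      have hzs := hzstar i
      have hlog : HasDerivAt (fun s => Real.log (z s i / zstar i))
          ((z t i * (1 + w i - k * (∑ j, z t j) ^ 2 + (k - 1) * z t i ^ 2) / zstar i)
            / (z t i / zstar i)) t :=
        (hzi.div_const (zstar i)).log (by positivity)
      have hd := (hzi.sub_const (zstar i)).fun_sub (hlog.const_mul (zstar i))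
      convert hd using 1
      field_simp
    have h2 : (∑ i, (z t i - zstar i) * (1 + w i - k * (∑ j, z t j) ^ 2 + (k - 1) * z t i ^ 2))
        = D t := by
      have e1 : ∀ i ∈ Finset.univ,
          (z t i - zstar i) * (1 + w i - k * (∑ j, z t j) ^ 2 + (k - 1) * z t i ^ 2)
          = (z t i - zstar i) * (k * (sstar ^ 2 - (∑ j, z t j) ^ 2))
            + (k - 1) * ((z t i - zstar i) ^ 2 * (z t i + zstar i)) := by
        intro i _
        linear_combination (zstar i - z t i) * (heq i)
      rw [Finset.sum_congr rfl e1, Finset.sum_add_distrib, ← Finset.sum_mul, ← Finset.mul_sum,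
        Finset.sum_sub_distrib, ← hsstar]
      simp only [hDdef]
      ring
    rw [← h2]; exact h1
  -- the dissipation bound
  obtain ⟨c1, hc1, hDle⟩ : ∃ c1 > 0, ∀ t ≥ (0:ℝ), D t ≤ -c1 * ∑ i, (z t i - zstar i) ^ 2 := by
    rcases eq_or_lt_of_le hn with h1 | h2
    · -- n = 1
      obtain rfl : n = 1 := h1.symm
      refine ⟨zstar 0, hzstar 0, ?_⟩
      intro t ht
      simp only [hDdef, hsstar, Fin.sum_univ_one]
      nlinarith [mul_nonneg (sq_nonneg (z t 0 - zstar 0)) (hpos t ht 0).le,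
        sq_nonneg (z t 0 - zstar 0), hzstar 0]
    · -- 2 ≤ n
      obtain ⟨i0, -, hmin⟩ := Finset.exists_min_image Finset.univ zstar hne
      have hn2 : (2:ℝ) ≤ (n:ℝ) := by exact_mod_cast h2
      have h3n : (3:ℝ) ≤ (n:ℝ) ^ 2 - 1 := by nlinarith
      have hk1 : k < 1 := by nlinarith [mul_le_mul_of_nonneg_left h3n hk0.le]
      refine ⟨(1 - k) * zstar i0, by nlinarith [hzstar i0], ?_⟩
      intro t ht
      simp only [hDdef]
      have hterm1 : 0 ≤ k * ((∑ j, z t j) - sstar) ^ 2 * ((∑ j, z t j) + sstar) := by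
        have h3 := hSpos t ht
        positivity
      have hterm2 : ∀ i ∈ Finset.univ,
          (z t i - zstar i) ^ 2 * zstar i0 ≤ (z t i - zstar i) ^ 2 * (z t i + zstar i) := by
        intro i _
        have h4 := hpos t ht i
        have h5 := hmin i (Finset.mem_univ i)
        nlinarith [sq_nonneg (z t i - zstar i)]
      have hs2 := Finset.sum_le_sum hterm2
      rw [← Finset.sum_mul] at hs2
      have h3 := mul_le_mul_of_nonneg_left hs2 (by linarith : (0:ℝ) ≤ 1 - k)
      linarith
  -- basic bounds on V
  have hg0 : ∀ t ≥ (0:ℝ), ∀ i,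
      0 ≤ z t i - zstar i - zstar i * Real.log (z t i / zstar i) :=
    fun t ht i => lyap_nonneg (hzstar i) (hpos t ht i)
  have hVnn : ∀ t ≥ (0:ℝ), 0 ≤ V t :=
    fun t ht => Finset.sum_nonneg (fun i _ => hg0 t ht i)
  have hgleV : ∀ t ≥ (0:ℝ), ∀ i,
      z t i - zstar i - zstar i * Real.log (z t i / zstar i) ≤ V t :=
    fun t ht i => Finset.single_le_sum (fun j _ => hg0 t ht j) (Finset.mem_univ i)
  -- antitone helper
  have anti_of : ∀ (f f' : ℝ → ℝ), (∀ t ≥ (0:ℝ), HasDerivAt f (f' t) t) →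
      (∀ t ≥ (0:ℝ), f' t ≤ 0) → AntitoneOn f (Set.Ici 0) := by
    intro f f' hf hf'
    apply antitoneOn_of_deriv_nonpos (convex_Ici 0)
    · exact fun t ht => (hf t ht).continuousAt.continuousWithinAt
    · intro t ht
      rw [interior_Ici] at ht
      exact (hf t ht.le).differentiableAt.differentiableWithinAt
    · intro t ht
      rw [interior_Ici] at ht
      rw [(hf t ht.le).deriv]
      exact hf' t ht.le
  have hDnp : ∀ t ≥ (0:ℝ), D t ≤ 0 := by
    intro t ht
    have h1 := hDle t ht
    have h2 : 0 ≤ ∑ i, (z t i - zstar i) ^ 2 :=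
      Finset.sum_nonneg fun i _ => sq_nonneg _
    nlinarith
  have hanti := anti_of V D hV' hDnp
  have hVle0 : ∀ t ≥ (0:ℝ), V t ≤ V 0 :=
    fun t ht => hanti Set.self_mem_Ici (Set.mem_Ici.mpr ht) ht
  have hV0nn : 0 ≤ V 0 := hVnn 0 le_rfl
  -- lower bound on trajectories
  have hlo : ∀ t ≥ (0:ℝ), ∀ i,
      zstar i * Real.exp (-((V 0 + zstar i) / zstar i)) ≤ z t i := by
    intro t ht i
    have h1 := lyap_lb_log (hzstar i) (hpos t ht i)
    have h2 := (hgleV t ht i).trans (hVle0 t ht)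
    have h3 : Real.log (zstar i / z t i) ≤ (V 0 + zstar i) / zstar i := by
      rw [le_div_iff₀ (hzstar i)]
      nlinarith
    have h4 : zstar i / z t i ≤ Real.exp ((V 0 + zstar i) / zstar i) :=
      (Real.log_le_iff_le_exp (div_pos (hzstar i) (hpos t ht i))).mp h3
    have hE : 0 < Real.exp ((V 0 + zstar i) / zstar i) := Real.exp_pos _
    have h5 : zstar i ≤ Real.exp ((V 0 + zstar i) / zstar i) * z t i := by
      have h6 := (div_le_iff₀ (hpos t ht i)).mp h4
      linarith [h6]
    rw [Real.exp_neg, mul_comm, inv_mul_le_iff₀ hE]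
    linarith
  -- uniform positive lower bound
  obtain ⟨i1, -, hmin1⟩ := Finset.exists_min_image Finset.univ
    (fun i => zstar i * Real.exp (-((V 0 + zstar i) / zstar i))) hne
  set mlo : ℝ := zstar i1 * Real.exp (-((V 0 + zstar i1) / zstar i1)) with hmlodef
  have hmlopos : 0 < mlo := by
    have := hzstar i1
    positivity
  have hmlole : ∀ t ≥ (0:ℝ), ∀ i, mlo ≤ z t i :=
    fun t ht i => le_trans (hmin1 i (Finset.mem_univ i)) (hlo t ht i)
  -- D ≤ -c V
  set c : ℝ := c1 * mlo with hcdef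
  have hcpos : 0 < c := mul_pos hc1 hmlopos
  have hVle : ∀ t ≥ (0:ℝ), mlo * V t ≤ ∑ i, (z t i - zstar i) ^ 2 := by
    intro t ht
    have h1 : ∀ i ∈ Finset.univ,
        z t i - zstar i - zstar i * Real.log (z t i / zstar i)
          ≤ (z t i - zstar i) ^ 2 / mlo := by
      intro i _
      calc z t i - zstar i - zstar i * Real.log (z t i / zstar i)
          ≤ (z t i - zstar i) ^ 2 / z t i := lyap_le (hzstar i) (hpos t ht i)
        _ ≤ (z t i - zstar i) ^ 2 / mlo :=
            div_le_div_of_nonneg_left (sq_nonneg _) hmlopos (hmlole t ht i)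
    have h2 := Finset.sum_le_sum h1
    rw [← Finset.sum_div] at h2
    have h3 : V t ≤ (∑ i, (z t i - zstar i) ^ 2) / mlo := h2
    have h4 := (le_div_iff₀ hmlopos).mp h3
    linarith
  have hDV : ∀ t ≥ (0:ℝ), D t ≤ -c * V t := by
    intro t ht
    have h1 := hDle t ht
    have h2 := hVle t ht
    have h3 := mul_le_mul_of_nonneg_left h2 hc1.le
    rw [hcdef]
    nlinarith
  -- V tends to 0
  have hVto : Filter.Tendsto V Filter.atTop (nhds 0) := by
    have hsmall : ∀ ε > (0:ℝ), ∃ T ≥ (0:ℝ), V T < ε := by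
      intro ε hε
      by_contra hcon
      push_neg at hcon
      have hW : ∀ t ≥ (0:ℝ), HasDerivAt (fun s => V s + c * ε * s) (D t + c * ε) t := by
        intro t ht
        have h1 : HasDerivAt (fun s : ℝ => c * ε * s) (c * ε) t := by
          simpa using (hasDerivAt_id t).const_mul (c * ε)
        exact (hV' t ht).add h1
      have hWanti := anti_of _ _ hW (fun t ht => by
        have h1 := hDV t ht
        have h2 := hcon t ht
        nlinarith)
      have ht0 : (0:ℝ) ≤ V 0 / (c * ε) := by positivity
      have h5 := hWanti Set.self_mem_Ici (Set.mem_Ici.mpr ht0) ht0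
      simp only [mul_zero, add_zero] at h5
      have h6 : c * ε * (V 0 / (c * ε)) = V 0 := by
        field_simp
      have h7 := hcon _ ht0
      nlinarith
    rw [Metric.tendsto_atTop]
    intro ε hε
    obtain ⟨T, hT0, hT⟩ := hsmall ε hε
    refine ⟨T, fun t ht => ?_⟩
    have ht0 : (0:ℝ) ≤ t := le_trans hT0 ht
    have h1 := hanti (Set.mem_Ici.mpr hT0) (Set.mem_Ici.mpr ht0) ht
    have h2 := hVnn t ht0
    rw [Real.dist_eq]
    rw [abs_of_nonneg (by linarith)]
    linarith
  -- conclude coordinatewise convergence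
  rw [tendsto_pi_nhds]
  intro i
  rw [← tendsto_sub_nhds_zero_iff]
  have hsq : Filter.Tendsto (fun t => (2 * Real.sqrt (zstar i) + Real.sqrt (V 0)) * Real.sqrt (V t))
      Filter.atTop (nhds 0) := by
    have h1 : Filter.Tendsto (fun t => Real.sqrt (V t)) Filter.atTop (nhds 0) := by
      have h2 := hVto.sqrt
      simpa using h2
    have h3 := h1.const_mul (2 * Real.sqrt (zstar i) + Real.sqrt (V 0))
    simpa using h3
  apply squeeze_zero_norm' ?_ hsq
  filter_upwards [Filter.eventually_ge_atTop (0:ℝ)] with t ht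
  have hx := hpos t ht i
  have ha := hzstar i
  have hg1 := lyap_sq_le ha hx
  have hgV := hgleV t ht i
  have hVt0 := hVle0 t ht
  have h2 : |Real.sqrt (z t i) - Real.sqrt (zstar i)| ≤ Real.sqrt (V t) := by
    rw [← Real.sqrt_sq_eq_abs]
    exact Real.sqrt_le_sqrt (by linarith)
  have h3 : Real.sqrt (z t i) - Real.sqrt (zstar i) ≤ Real.sqrt (V 0) := by
    have h4 : |Real.sqrt (z t i) - Real.sqrt (zstar i)| ≤ Real.sqrt (V 0) := by
      rw [← Real.sqrt_sq_eq_abs]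
      exact Real.sqrt_le_sqrt (by linarith)
    exact le_trans (le_abs_self _) h4
  have hxa : (Real.sqrt (z t i) + Real.sqrt (zstar i))
      * |Real.sqrt (z t i) - Real.sqrt (zstar i)| = |z t i - zstar i| := by
    rw [← abs_of_nonneg (show (0:ℝ) ≤ Real.sqrt (z t i) + Real.sqrt (zstar i) by positivity),
      ← abs_mul]
    congr 1
    linear_combination Real.sq_sqrt hx.le - Real.sq_sqrt ha.le
  have hb1 : Real.sqrt (z t i) + Real.sqrt (zstar i)
      ≤ 2 * Real.sqrt (zstar i) + Real.sqrt (V 0) := by linarith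
  have h6 := mul_le_mul hb1 h2 (abs_nonneg _)
    (by positivity)
  rw [hxa] at h6
  rw [Real.norm_eq_abs]
  exact h6
end

section
/- Let n ≥ 1, let k > 0, and let w ∈ ℝⁿ with w_i ≥ 0 for all i. Fix an index j and suppose 1 + w_i < k(1 + w_j) for every i ≠ j. Define F : ℝⁿ → ℝⁿ by F_i(z) = z_i·(1 + w_i − k·(∑_{l=1}^n z_l)² + (k−1)·z_i²), and let z* ∈ ℝⁿ be the point with z*_j = √(1 + w_j) and z*_i = 0 for i ≠ j. Then F(z*) = 0 and every complex eigenvalue of the Jacobian matrix DF(z*) (the matrix of partial derivatives ∂F_i/∂z_l at z*) has strictly negative real part. -/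
private lemma hdA (K a b c d s0 : ℝ) :
    HasDerivAt (fun s : ℝ => K * (a - b * (s + c) ^ 2 + d)) (K * (-(b * (2 * (s0 + c))))) s0 := by
  have h1 : HasDerivAt (fun s : ℝ => s + c) 1 s0 := (hasDerivAt_id s0).add_const c
  have h2 : HasDerivAt (fun s : ℝ => (s + c) ^ 2) (2 * (s0 + c)) s0 := by
    simpa using h1.fun_pow 2
  have h4 : HasDerivAt (fun s : ℝ => a - b * (s + c) ^ 2 + d)
      (-(b * (2 * (s0 + c)))) s0 := by
    simpa using ((h2.const_mul b).const_sub a).add_const d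
  simpa using h4.const_mul K

private lemma hdB (a b c d s0 : ℝ) :
    HasDerivAt (fun s : ℝ => s * (a - b * (s + c) ^ 2 + d * s ^ 2))
      (a - b * (s0 + c) ^ 2 + d * s0 ^ 2 + s0 * (-(b * (2 * (s0 + c))) + d * (2 * s0))) s0 := by
  have h1 : HasDerivAt (fun s : ℝ => s + c) 1 s0 := (hasDerivAt_id s0).add_const c
  have h2 : HasDerivAt (fun s : ℝ => (s + c) ^ 2) (2 * (s0 + c)) s0 := by
    simpa using h1.fun_pow 2
  have h3 : HasDerivAt (fun s : ℝ => s ^ 2) (2 * s0) s0 := by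
    simpa using (hasDerivAt_id s0).fun_pow 2
  have h4 : HasDerivAt (fun s : ℝ => a - b * (s + c) ^ 2 + d * s ^ 2)
      (-(b * (2 * (s0 + c))) + d * (2 * s0)) s0 :=
    ((h2.const_mul b).const_sub a).add (h3.const_mul d)
  have h5 : HasDerivAt (fun s : ℝ => id s * (a - b * (s + c) ^ 2 + d * s ^ 2))
      (1 * (a - b * (s0 + c) ^ 2 + d * s0 ^ 2) + id s0 * (-(b * (2 * (s0 + c))) + d * (2 * s0))) s0 :=
    (hasDerivAt_id s0).fun_mul h4
  simp only [id_eq] at h5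
  convert h5 using 1
  ring

/-- For the 3-uniform higher-order Lotka–Volterra vector field `F`,
if `1 + w_i < k(1 + w_j)` for all `i ≠ j`, then the single-winner point `z*`
(`z*_j = √(1+w_j)`, `z*_i = 0` otherwise) is an equilibrium and every complex
eigenvalue of the Jacobian `DF(z*)` has strictly negative real part. -/
theorem stmt_12 (n : ℕ) (hn : 1 ≤ n) (k : ℝ) (hk : 0 < k)
    (w : Fin n → ℝ) (hw : ∀ i, 0 ≤ w i)
    (j : Fin n) (hdom : ∀ i, i ≠ j → 1 + w i < k * (1 + w j))
    (F : (Fin n → ℝ) → (Fin n → ℝ))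
    (hF : ∀ z i, F z i = z i * (1 + w i - k * (∑ l, z l) ^ 2 + (k - 1) * z i ^ 2))
    (zstar : Fin n → ℝ)
    (hzstar : zstar = fun i => if i = j then Real.sqrt (1 + w j) else 0)
    (J : Matrix (Fin n) (Fin n) ℝ)
    (hJ : ∀ i l, J i l = deriv (fun s : ℝ => F (Function.update zstar l s) i) (zstar l)) :
    F zstar = 0 ∧
    ∀ μ : ℂ, (∃ v : Fin n → ℂ, v ≠ 0 ∧
        (J.map (fun x : ℝ => (x : ℂ))).mulVec v = μ • v) → μ.re < 0 := by
  have hTnn : (0:ℝ) ≤ 1 + w j := by have := hw j; linarith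
  set T := Real.sqrt (1 + w j) with hT
  have hT2 : T ^ 2 = 1 + w j := Real.sq_sqrt hTnn
  have hTpos : 0 < T := Real.sqrt_pos.mpr (by have := hw j; linarith)
  have hzj : zstar j = T := by rw [hzstar]; simp
  have hzi : ∀ i, i ≠ j → zstar i = 0 := by intro i hi; rw [hzstar]; simp [hi]
  have hsum : ∑ l, zstar l = T := by
    rw [hzstar]
    simp [Finset.sum_ite_eq']
  -- Jacobian entries
  have hJval : ∀ i l, J i l =
      if i = l then (if i = j then -2 * T ^ 2 else 1 + w i - k * T ^ 2)
      else (if i = j then -2 * k * T ^ 2 else 0) := by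
    intro i l
    rw [hJ]
    set C : ℝ := ∑ m ∈ Finset.univ.erase l, zstar m with hCdef
    have hC : zstar l + C = T := by
      rw [hCdef, Finset.add_sum_erase _ _ (Finset.mem_univ l)]
      exact hsum
    have hupd : ∀ s : ℝ, (∑ m, Function.update zstar l s m) = s + C := by
      intro s
      rw [Finset.sum_update_of_mem (Finset.mem_univ l)]
      congr 1
      · rw [hCdef]
        congr 1
        ext m
        simp [Finset.mem_erase, and_comm, eq_comm]
    have hfun : (fun s : ℝ => F (Function.update zstar l s) i) =
        fun s : ℝ => (if i = l then s else zstar i) *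
          (1 + w i - k * (s + C) ^ 2 + (k - 1) * (if i = l then s else zstar i) ^ 2) := by
      funext s
      rw [hF, hupd, Function.update_apply]
    by_cases hil : i = l
    · subst hil
      have hfun2 : (fun s : ℝ => F (Function.update zstar i s) i) =
          fun s : ℝ => s * (1 + w i - k * (s + C) ^ 2 + (k - 1) * s ^ 2) := by
        funext s
        rw [hF, hupd, Function.update_self]
      rw [hfun2, (hdB (1 + w i) k C (k - 1) (zstar i)).deriv, if_pos rfl]
      by_cases hij : i = j
      · have hCv : C = 0 := by rw [hij, hzj] at hC; linarith
        rw [if_pos hij, hij, hzj, hCv]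
        linear_combination -hT2
      · have hCv : C = T := by rw [hzi i hij] at hC; linarith
        rw [if_neg hij, hzi i hij, hCv]
        ring
    · rw [hfun]
      simp only [if_neg hil]
      rw [(hdA (zstar i) (1 + w i) k C ((k - 1) * zstar i ^ 2) (zstar l)).deriv, hC]
      by_cases hij : i = j
      · rw [if_pos hij, hij, hzj]
        ring
      · rw [if_neg hij, hzi i hij]
        ring
  constructor
  · funext i
    rw [hF, hsum]
    by_cases hij : i = j
    · rw [hij, hzj]
      show T * (1 + w j - k * T ^ 2 + (k - 1) * T ^ 2) = 0
      linear_combination (-T) * hT2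
    · rw [hzi i hij]
      show (0:ℝ) * _ = 0
      ring
  · rintro μ ⟨v, hv, hmv⟩
    have hrow : ∀ i, (∑ l, ((J i l : ℂ) * v l)) = μ * v i := by
      intro i
      have := congrFun hmv i
      simpa [Matrix.mulVec, dotProduct, Matrix.map_apply] using this
    by_cases hex : ∃ i, i ≠ j ∧ v i ≠ 0
    · obtain ⟨i, hij, hvi⟩ := hex
      have hsum' : (∑ l, ((J i l : ℂ) * v l)) = (J i i : ℂ) * v i := by
        apply Finset.sum_eq_single
        · intro l _ hl
          have : J i l = 0 := by rw [hJval]; simp [Ne.symm hl, hij]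
          simp [this]
        · intro h; exact absurd (Finset.mem_univ i) h
      have hd : J i i = 1 + w i - k * T ^ 2 := by rw [hJval]; simp [hij]
      have hμ : μ = ((1 + w i - k * T ^ 2 : ℝ) : ℂ) := by
        have := hsum'.symm.trans (hrow i)
        rw [hd] at this
        exact (mul_right_cancel₀ hvi this).symm
      rw [hμ]
      simp only [Complex.ofReal_re]
      have := hdom i hij
      rw [hT2]
      linarith
    · push_neg at hex
      have hvj : v j ≠ 0 := by
        intro h
        apply hv
        funext l
        by_cases hl : l = j
        · subst hl; exact h
        · exact hex l hl
      have hsum' : (∑ l, ((J j l : ℂ) * v l)) = (J j j : ℂ) * v j := by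
        apply Finset.sum_eq_single
        · intro l _ hl
          rw [hex l hl, mul_zero]
        · intro h; exact absurd (Finset.mem_univ j) h
      have hd : J j j = -2 * T ^ 2 := by rw [hJval]; simp
      have hμ : μ = ((-2 * T ^ 2 : ℝ) : ℂ) := by
        have := hsum'.symm.trans (hrow j)
        rw [hd] at this
        exact (mul_right_cancel₀ hvj this).symm
      rw [hμ]
      simp only [Complex.ofReal_re]
      nlinarith
end

section
/- Let n ≥ 1, let 0 < k < 1, and let w ∈ ℝⁿ with w_i ≥ 0 for all i. Let D ⊆ {1,…,n} be nonempty, and let z* ∈ ℝⁿ satisfy z*_i > 0 for i ∈ D, z*_i = 0 for i ∉ D, and k(∑_{j∈D} z*_j)² + (1−k)(z*_i)² = 1 + w_i for every i ∈ D. Set r = ∑_{j∈D} z*_j and suppose 1 + w_i < k·r² for every i ∉ D. Define F : ℝⁿ → ℝⁿ by F_i(z) = z_i·(1 + w_i − k·(∑_{l=1}^n z_l)² + (k−1)·z_i²). Then F(z*) = 0 and every complex eigenvalue of the Jacobian matrix DF(z*) has strictly negative real part. -/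
/-- For `0 < k < 1`, a winner-share-all equilibrium `z*` supported on a
nonempty winner set `D` satisfying the equilibrium equations on `D` and the
loser-stability condition `1 + w_i < k r²` (`r = ∑_{j∈D} z*_j`) for all `i ∉ D`
is an equilibrium of `F` whose Jacobian `DF(z*)` has all complex eigenvalues with
strictly negative real part. -/
theorem stmt_13 (n : ℕ) (hn : 1 ≤ n) (k : ℝ) (hk0 : 0 < k) (hk1 : k < 1)
    (w : Fin n → ℝ) (hw : ∀ i, 0 ≤ w i)
    (D : Finset (Fin n)) (hD : D.Nonempty)
    (zstar : Fin n → ℝ)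
    (hpos : ∀ i ∈ D, 0 < zstar i) (hzero : ∀ i ∉ D, zstar i = 0)
    (heq : ∀ i ∈ D, k * (∑ j ∈ D, zstar j) ^ 2 + (1 - k) * zstar i ^ 2 = 1 + w i)
    (hlose : ∀ i ∉ D, 1 + w i < k * (∑ j ∈ D, zstar j) ^ 2)
    (F : (Fin n → ℝ) → (Fin n → ℝ))
    (hF : ∀ z i, F z i = z i * (1 + w i - k * (∑ l, z l) ^ 2 + (k - 1) * z i ^ 2))
    (J : Matrix (Fin n) (Fin n) ℝ)
    (hJ : ∀ i l, J i l = deriv (fun s : ℝ => F (Function.update zstar l s) i) (zstar l)) :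
    F zstar = 0 ∧
    ∀ μ : ℂ, (∃ v : Fin n → ℂ, v ≠ 0 ∧
        (J.map (fun x : ℝ => (x : ℂ))).mulVec v = μ • v) → μ.re < 0 := by
  set r : ℝ := ∑ j ∈ D, zstar j with hrdef
  have hrpos : 0 < r := Finset.sum_pos (fun i hi => hpos i hi) hD
  have htot : ∑ l, zstar l = r := by
    rw [hrdef, Finset.sum_subset (Finset.subset_univ D)]
    intro x _ hx; exact hzero x hx
  have hB : ∀ i ∈ D, 1 + w i - k * r ^ 2 + (k - 1) * zstar i ^ 2 = 0 := by
    intro i hi; have := heq i hi; linarith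
  have hFz : F zstar = 0 := by
    funext i
    rw [hF, htot]
    by_cases hi : i ∈ D
    · rw [hB i hi, mul_zero]; rfl
    · rw [hzero i hi, zero_mul]; rfl
  refine ⟨hFz, ?_⟩
  -- compute the Jacobian entries
  have hJval : ∀ i l, J i l =
      -(2 * k * r) * zstar i +
        (if i = l then (1 + w i - k * r ^ 2 + (k - 1) * zstar i ^ 2)
            + 2 * (k - 1) * zstar i ^ 2 else 0) := by
    intro i l
    rw [hJ]
    set c : ℝ := ∑ l' ∈ Finset.univ \ {l}, zstar l' with hcdef
    have hc : ∀ s : ℝ, ∑ l', Function.update zstar l s l' = s + c := by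
      intro s; rw [Finset.sum_update_of_mem (Finset.mem_univ l)]
    have hcr : zstar l + c = r := by
      have he : Finset.univ \ {l} = Finset.univ.erase l := by
        rw [Finset.erase_eq]
      rw [hcdef, he, Finset.add_sum_erase _ _ (Finset.mem_univ l), htot]
    by_cases hil : i = l
    · subst hil
      have hfun : (fun s : ℝ => F (Function.update zstar i s) i)
          = fun s : ℝ => s * (1 + w i - k * (s + c) ^ 2 + (k - 1) * s ^ 2) := by
        funext s
        rw [hF, hc, Function.update_self]
      rw [hfun]
      have h1 : HasDerivAt (fun s : ℝ => s + c) 1 (zstar i) :=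
        (hasDerivAt_id (zstar i)).add_const c
      have h2 : HasDerivAt (fun s : ℝ => (s + c) ^ 2)
          ((2 : ℕ) * (zstar i + c) ^ (2 - 1) * 1) (zstar i) := h1.pow 2
      have h3 : HasDerivAt (fun s : ℝ => 1 + w i - k * (s + c) ^ 2 + (k - 1) * s ^ 2)
          (0 - k * ((2 : ℕ) * (zstar i + c) ^ (2 - 1) * 1)
            + (k - 1) * ((2 : ℕ) * zstar i ^ (2 - 1))) (zstar i) := by
        exact ((hasDerivAt_const (zstar i) (1 + w i)).sub (h2.const_mul k)).add
          ((hasDerivAt_pow 2 (zstar i)).const_mul (k - 1))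
      have h4 : HasDerivAt (fun s : ℝ => s * (1 + w i - k * (s + c) ^ 2 + (k - 1) * s ^ 2)) _
          (zstar i) := (hasDerivAt_id' (x := zstar i)).mul h3
      rw [h4.deriv]
      have hci : zstar i + c = r := hcr
      rw [if_pos rfl]
      have h0 : c = r - zstar i := by linarith
      rw [h0]; ring
    · have hfun : (fun s : ℝ => F (Function.update zstar l s) i)
          = fun s : ℝ => zstar i * (1 + w i - k * (s + c) ^ 2 + (k - 1) * zstar i ^ 2) := by
        funext s
        rw [hF, hc, Function.update_of_ne hil]
      rw [hfun]
      have h1 : HasDerivAt (fun s : ℝ => s + c) 1 (zstar l) :=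
        (hasDerivAt_id (zstar l)).add_const c
      have h2 : HasDerivAt (fun s : ℝ => (s + c) ^ 2)
          ((2 : ℕ) * (zstar l + c) ^ (2 - 1) * 1) (zstar l) := h1.pow 2
      have h3 : HasDerivAt (fun s : ℝ => 1 + w i - k * (s + c) ^ 2 + (k - 1) * zstar i ^ 2)
          (0 - k * ((2 : ℕ) * (zstar l + c) ^ (2 - 1) * 1) + 0) (zstar l) := by
        exact ((hasDerivAt_const (zstar l) (1 + w i)).sub (h2.const_mul k)).add
          (hasDerivAt_const (zstar l) ((k - 1) * zstar i ^ 2))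
      have h4 := h3.const_mul (zstar i)
      rw [h4.deriv, if_neg hil, hcr]
      ring
  rintro μ ⟨v, hv, hmv⟩
  set T : ℂ := ∑ l, v l with hTdef
  have heig : ∀ i, ∑ l, (J i l : ℂ) * v l = μ * v i := by
    intro i
    have := congrFun hmv i
    simpa [Matrix.mulVec, dotProduct, Matrix.map_apply, Pi.smul_apply,
      smul_eq_mul] using this
  have hrow : ∀ i, μ * v i = ((-(2 * k * r) * zstar i : ℝ) : ℂ) * T
      + (((1 + w i - k * r ^ 2 + (k - 1) * zstar i ^ 2)
          + 2 * (k - 1) * zstar i ^ 2 : ℝ) : ℂ) * v i := by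
    intro i
    rw [← heig i]
    have : ∀ l, (J i l : ℂ) * v l = ((-(2 * k * r) * zstar i : ℝ) : ℂ) * v l
        + (if i = l then (((1 + w i - k * r ^ 2 + (k - 1) * zstar i ^ 2)
          + 2 * (k - 1) * zstar i ^ 2 : ℝ) : ℂ) * v l else 0) := by
      intro l
      rw [hJval i l]
      by_cases hil : i = l
      · rw [if_pos hil, if_pos hil]; push_cast; ring
      · rw [if_neg hil, if_neg hil]; push_cast; ring
    rw [Finset.sum_congr rfl fun l _ => this l, Finset.sum_add_distrib,
      Finset.sum_ite_eq Finset.univ i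
        (fun l => (((1 + w i - k * r ^ 2 + (k - 1) * zstar i ^ 2)
          + 2 * (k - 1) * zstar i ^ 2 : ℝ) : ℂ) * v l),
      if_pos (Finset.mem_univ i), ← Finset.mul_sum, ← hTdef]
  by_cases hsupp : ∀ i ∉ D, v i = 0
  · -- eigenvector supported on the winner set
    obtain ⟨i0, hi0⟩ := Function.ne_iff.mp hv
    simp only [Pi.zero_apply] at hi0
    have hi0D : i0 ∈ D := by
      by_contra h; exact hi0 (hsupp i0 h)
    have hTD : (∑ l ∈ D, v l) = T := by
      rw [hTdef, Finset.sum_subset (Finset.subset_univ D)]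
      intro x _ hx; exact hsupp x hx
    set S : ℝ := ∑ i ∈ D, Complex.normSq (v i) / zstar i with hSdef
    set Q : ℝ := ∑ i ∈ D, zstar i * Complex.normSq (v i) with hQdef
    have hSpos : 0 < S := by
      apply Finset.sum_pos'
      · intro i hi
        exact div_nonneg (Complex.normSq_nonneg _) (hpos i hi).le
      · exact ⟨i0, hi0D, div_pos (Complex.normSq_pos.mpr hi0) (hpos i0 hi0D)⟩
    have hQpos : 0 < Q := by
      apply Finset.sum_pos'
      · intro i hi
        exact mul_nonneg (hpos i hi).le (Complex.normSq_nonneg _)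
      · exact ⟨i0, hi0D, mul_pos (hpos i0 hi0D) (Complex.normSq_pos.mpr hi0)⟩
    have term : ∀ i ∈ D, μ * ((Complex.normSq (v i) : ℂ) / (zstar i : ℂ))
        = -(2 * k * r) * ((starRingEnd ℂ) (v i) * T)
          + 2 * (k - 1) * ((zstar i : ℂ) * (Complex.normSq (v i) : ℂ)) := by
      intro i hi
      have hz : (zstar i : ℂ) ≠ 0 := by
        exact_mod_cast (hpos i hi).ne'
      have h1 := hrow i
      rw [hB i hi] at h1
      have hns : ((Complex.normSq (v i) : ℝ) : ℂ) = v i * (starRingEnd ℂ) (v i) :=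
        (Complex.mul_conj (v i)).symm
      rw [← mul_div_assoc, div_eq_iff hz, hns]
      push_cast at h1 ⊢
      linear_combination ((starRingEnd ℂ) (v i)) * h1
    have key : μ * (S : ℂ) = -(2 * k * r) * (Complex.normSq T : ℂ)
        + 2 * (k - 1) * (Q : ℂ) := by
      have hS : (S : ℂ) = ∑ i ∈ D, (Complex.normSq (v i) : ℂ) / (zstar i : ℂ) := by
        rw [hSdef]; push_cast; rfl
      have hQ : (Q : ℂ) = ∑ i ∈ D, (zstar i : ℂ) * (Complex.normSq (v i) : ℂ) := by
        rw [hQdef]; push_cast; rfl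
      rw [hS, hQ, Finset.mul_sum, Finset.sum_congr rfl term, Finset.sum_add_distrib,
        ← Finset.mul_sum, ← Finset.mul_sum, ← Finset.sum_mul, ← map_sum, hTD,
        mul_comm ((starRingEnd ℂ) T) T, Complex.mul_conj]
    have key2 : μ * (S : ℂ)
        = ((-(2 * k * r) * Complex.normSq T + 2 * (k - 1) * Q : ℝ) : ℂ) := by
      rw [key]; push_cast; ring
    have hre := congrArg Complex.re key2
    simp only [Complex.mul_re, Complex.ofReal_re, Complex.ofReal_im, mul_zero, sub_zero] at hre
    have hnsT : 0 ≤ Complex.normSq T := Complex.normSq_nonneg T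
    by_contra hcon
    push_neg at hcon
    have p1 : 0 ≤ μ.re * S := mul_nonneg hcon hSpos.le
    have p2 : 0 ≤ 2 * k * r * Complex.normSq T := by positivity
    have p3 : (k - 1) * Q < 0 := mul_neg_of_neg_of_pos (by linarith) hQpos
    nlinarith [p1, p2, p3, hre]
  · -- some loser coordinate is nonzero
    push_neg at hsupp
    obtain ⟨i, hiD, hvi⟩ := hsupp
    have h1 := hrow i
    rw [hzero i hiD] at h1
    have h2 : μ * v i = ((1 + w i - k * r ^ 2 : ℝ) : ℂ) * v i := by
      rw [h1]; push_cast; ring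
    have h3 : μ = ((1 + w i - k * r ^ 2 : ℝ) : ℂ) :=
      mul_right_cancel₀ hvi h2
    rw [h3, Complex.ofReal_re]
    have := hlose i hiD
    linarith
end

section
/- Let n ≥ 1 and w ∈ ℝⁿ. Let z : [0,∞) → ℝⁿ be differentiable with z_i(t) > 0 for all i and all t ≥ 0, satisfying dz_i/dt(t) = z_i(t)·(1 + w_i − (∑_{j=1}^n z_j(t))²) for all t ≥ 0 and all i. Then for every index i and every t ≥ 0, z_i(t)·z_1(0) = z_1(t)·z_i(0)·exp((w_i − w_1)·t); equivalently, z_i(t)/z_1(t) = (z_i(0)/z_1(0))·e^{(w_i − w_1)t}. -/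
/-- For the `k = 1` system `ż_i = z_i(1 + w_i − (∑ z_j)²)` with strictly
positive trajectory, the ratio identity
`z_i(t) z_1(0) = z_1(t) z_i(0) e^{(w_i − w_1)t}` holds for all `i` and `t ≥ 0`. -/
theorem stmt_14 (n : ℕ) (hn : 0 < n) (w : Fin n → ℝ)
    (z : ℝ → Fin n → ℝ)
    (hpos : ∀ t ≥ (0 : ℝ), ∀ i, 0 < z t i)
    (hode : ∀ t ≥ (0 : ℝ), ∀ i, HasDerivAt (fun s => z s i)
      (z t i * (1 + w i - (∑ j, z t j) ^ 2)) t) :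
    ∀ i : Fin n, ∀ t ≥ (0 : ℝ),
      z t i * z 0 ⟨0, hn⟩ =
        z t ⟨0, hn⟩ * z 0 i * Real.exp ((w i - w ⟨0, hn⟩) * t) := by
  intro i t ht
  set i0 : Fin n := ⟨0, hn⟩ with hi0
  set c : ℝ := w i - w i0 with hc
  set v : ℝ → ℝ := fun s => z s i / z s i0 * Real.exp (-c * s) with hv
  have hderiv : ∀ s ≥ (0 : ℝ), HasDerivAt v 0 s := by
    intro s hs
    have h1 := hode s hs i
    have h0 := hode s hs i0
    have hz0 : z s i0 ≠ 0 := (hpos s hs i0).ne'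
    have hq : HasDerivAt (fun u => z u i / z u i0) ((z s i / z s i0) * c) s := by
      have hdiv := h1.div h0 hz0
      refine HasDerivAt.congr_deriv hdiv ?_
      rw [hc]
      field_simp
      ring
    have he : HasDerivAt (fun u : ℝ => Real.exp (-c * u)) (-c * Real.exp (-c * s)) s := by
      have h := ((hasDerivAt_id s).const_mul (-c)).exp
      simpa [mul_comm] using h
    have hm := hq.mul he
    refine HasDerivAt.congr_deriv hm ?_
    ring
  have hcont : ContinuousOn v (Set.Icc 0 t) := fun s hs =>
    (hderiv s hs.1).continuousAt.continuousWithinAt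
  have hkey : v t = v 0 := by
    have := constant_of_has_deriv_right_zero hcont
      (fun s hs => (hderiv s hs.1).hasDerivWithinAt) t ⟨ht, le_refl t⟩
    exact this
  have hz0t : z t i0 ≠ 0 := (hpos t ht i0).ne'
  have hz00 : z 0 i0 ≠ 0 := (hpos 0 le_rfl i0).ne'
  have hexp : Real.exp (-c * t) * Real.exp (c * t) = 1 := by
    rw [← Real.exp_add]; ring_nf; exact Real.exp_zero
  have hkey' : z t i / z t i0 * Real.exp (-c * t) = z 0 i / z 0 i0 := by
    simpa [hv] using hkey
  have h2 : z t i * Real.exp (-c * t) * z 0 i0 = z 0 i * z t i0 := by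
    field_simp at hkey'
    simp only [neg_mul] at hkey' ⊢
    rw [hkey']
    ring
  have := congrArg (fun x => x * Real.exp (c * t)) h2
  calc z t i * z 0 i0 = z t i * Real.exp (-c * t) * z 0 i0 * Real.exp (c * t) := by
        rw [mul_assoc (z t i * Real.exp (-c * t)) (z 0 i0) (Real.exp (c * t))]
        rw [mul_comm (z 0 i0) (Real.exp (c * t)), ← mul_assoc, mul_assoc (z t i)]
        rw [hexp]; ring
    _ = z 0 i * z t i0 * Real.exp (c * t) := by rw [h2]
    _ = z t i0 * z 0 i * Real.exp (c * t) := by ring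
end

section
/- Let n ≥ 1 and let w ∈ ℝⁿ satisfy w_1 > w_i ≥ 0 for every i ≥ 2. Let z : [0,∞) → ℝⁿ be differentiable with z_i(t) > 0 for all i and all t ≥ 0, satisfying dz_i/dt(t) = z_i(t)·(1 + w_i − (∑_{j=1}^n z_j(t))²) for all t ≥ 0 and all i. Then, as t → ∞, z_1(t) → √(1 + w_1) and z_i(t) → 0 for every i ≥ 2; that is, the system converges to the winner-take-all equilibrium (√(1 + w_max), 0, …, 0)ᵀ. -/
open Filter Real

noncomputable def Pfun (l t : ℝ) : ℝ := if l = 0 then t else (Real.exp (l*t) - 1)/l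

lemma Pfun_zero (l : ℝ) : Pfun l 0 = 0 := by
  unfold Pfun; split <;> simp

lemma hasDerivAt_Pfun (l t : ℝ) : HasDerivAt (Pfun l) (Real.exp (l*t)) t := by
  unfold Pfun
  rcases eq_or_ne l 0 with h | h
  · simp [h]; exact hasDerivAt_id t
  · simp only [if_neg h]
    have : HasDerivAt (fun t => (Real.exp (l*t) - 1)/l) ((Real.exp (l*t) * l - 0)/l) t :=
      (((Real.hasDerivAt_exp (l*t)).comp t ((hasDerivAt_id t).const_mul l)).sub_const 1).div_const l |>.congr_deriv (by ring)
    exact this.congr_deriv (by field_simp; ring)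

lemma Pfun_nonneg (l : ℝ) {t : ℝ} (ht : 0 ≤ t) : 0 ≤ Pfun l t := by
  unfold Pfun
  rcases lt_trichotomy l 0 with h | h | h
  · rw [if_neg h.ne]
    apply div_nonneg_iff.mpr (Or.inr ⟨?_, h.le⟩)
    simp only [sub_nonpos]
    exact Real.exp_le_one_iff.mpr (mul_nonpos_of_nonpos_of_nonneg h.le ht)
  · simpa [h] using ht
  · rw [if_neg h.ne']
    apply div_nonneg _ h.le
    simp only [sub_nonneg]
    exact Real.one_le_exp (mul_nonneg h.le ht)

lemma const_of_deriv (f : ℝ → ℝ) (hf : ∀ t ≥ (0:ℝ), HasDerivAt f 0 t) {b : ℝ} (hb : 0 ≤ b) :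
    f b = f 0 := by
  have hcont : ContinuousOn f (Set.Icc 0 b) := fun x hx =>
    ((hf x hx.1).continuousAt).continuousWithinAt
  exact constant_of_has_deriv_right_zero hcont
    (fun x hx => (hf x hx.1).hasDerivWithinAt) b (Set.right_mem_Icc.mpr hb)

noncomputable def Gfun (n : ℕ) (c μ : Fin n → ℝ) (t : ℝ) : ℝ :=
  ∑ j, ∑ k, c j * c k * Pfun (μ j + μ k) t

lemma Gfun_zero (n : ℕ) (c μ : Fin n → ℝ) : Gfun n c μ 0 = 0 := by
  simp [Gfun, Pfun_zero]

lemma Gfun_nonneg (n : ℕ) (c μ : Fin n → ℝ) (hc : ∀ i, 0 ≤ c i) {t : ℝ} (ht : 0 ≤ t) :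
    0 ≤ Gfun n c μ t :=
  Finset.sum_nonneg fun j _ => Finset.sum_nonneg fun k _ =>
    mul_nonneg (mul_nonneg (hc j) (hc k)) (Pfun_nonneg _ ht)

lemma hasDerivAt_Gfun (n : ℕ) (c μ : Fin n → ℝ) (t : ℝ) :
    HasDerivAt (Gfun n c μ) ((∑ j, c j * Real.exp (μ j * t))^2) t := by
  have h : HasDerivAt (Gfun n c μ)
      (∑ j, ∑ k, c j * c k * Real.exp ((μ j + μ k) * t)) t := by
    apply HasDerivAt.fun_sum
    intro j _
    apply HasDerivAt.fun_sum
    intro k _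
    exact (hasDerivAt_Pfun (μ j + μ k) t).const_mul (c j * c k)
  refine h.congr_deriv ?_
  rw [sq, Finset.sum_mul_sum]
  apply Finset.sum_congr rfl; intro j _
  apply Finset.sum_congr rfl; intro k _
  rw [show (μ j + μ k) * t = μ j * t + μ k * t by ring, Real.exp_add]
  ring

lemma exp_lim_neg {a : ℝ} (ha : a < 0) :
    Tendsto (fun t : ℝ => Real.exp (a*t)) atTop (nhds 0) := by
  rw [tendsto_exp_comp_nhds_zero]
  exact Tendsto.const_mul_atTop_of_neg ha tendsto_id

lemma limLtAux {lam m : ℝ} (hlam : lam ≠ 0) (h : lam < m) (hm : 0 < m) :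
    Tendsto (fun t => Real.exp (-(m*t)) * Pfun lam t) atTop (nhds 0) := by
  have key : ∀ t : ℝ, (Real.exp ((lam - m)*t) - Real.exp ((-m)*t))/lam
      = Real.exp (-(m*t)) * Pfun lam t := by
    intro t
    rw [Pfun, if_neg hlam, show (lam-m)*t = lam*t + -(m*t) by ring, Real.exp_add,
      show (-m)*t = -(m*t) by ring]
    ring
  have : Tendsto (fun t => (Real.exp ((lam - m)*t) - Real.exp ((-m)*t))/lam) atTop
      (nhds ((0-0)/lam)) :=
    ((exp_lim_neg (by linarith)).sub (exp_lim_neg (by linarith))).div_const lam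
  simpa using this.congr key

lemma limEqAux {m : ℝ} (hm : 0 < m) :
    Tendsto (fun t => Real.exp (-(m*t)) * Pfun m t) atTop (nhds (1/m)) := by
  have key : ∀ t : ℝ, (1 - Real.exp ((-m)*t))/m = Real.exp (-(m*t)) * Pfun m t := by
    intro t
    rw [Pfun, if_neg hm.ne', show (-m)*t = -(m*t) by ring]
    have h1 : Real.exp (-(m*t)) * Real.exp (m*t) = 1 := by
      rw [← Real.exp_add]; simp
    field_simp
    nlinarith [h1]
  have : Tendsto (fun t => (1 - Real.exp ((-m)*t))/m) atTop (nhds ((1-0)/m)) :=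
    (tendsto_const_nhds.sub (exp_lim_neg (by linarith))).div_const m
  simpa using this.congr key

lemma tendsto_main (n : ℕ) (c μ : Fin n → ℝ) (i0 : Fin n) (hc : ∀ i, 0 < c i)
    (hμpos : ∀ j, 0 < μ j) (hlt : ∀ j, j ≠ i0 → μ j < μ i0) :
    Tendsto (fun t => Real.exp (-(2 * μ i0 * t)) * (1 + 2 * Gfun n c μ t))
      atTop (nhds ((c i0)^2 / μ i0)) := by
  have hle : ∀ j, μ j ≤ μ i0 := by
    intro j; by_cases hj : j = i0
    · rw [hj]
    · exact (hlt j hj).le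
  have key : ∀ t : ℝ, Real.exp (-(2 * μ i0 * t)) * (1 + 2 * Gfun n c μ t)
      = Real.exp (-(2 * μ i0)*t) +
        ∑ j, ∑ k, (2 * (c j * c k)) * (Real.exp (-(2 * μ i0 * t)) * Pfun (μ j + μ k) t) := by
    intro t
    have e1 : Real.exp (-(2 * μ i0 * t)) * Gfun n c μ t
        = ∑ j, ∑ k, (c j * c k) * (Real.exp (-(2 * μ i0 * t)) * Pfun (μ j + μ k) t) := by
      rw [Gfun, Finset.mul_sum]
      refine Finset.sum_congr rfl fun j _ => ?_
      rw [Finset.mul_sum]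
      exact Finset.sum_congr rfl fun k _ => by ring
    have e2 : ∀ x y : ℝ, x * (1 + 2 * y) = x + 2 * (x * y) := fun x y => by ring
    rw [show (-(2 * μ i0))*t = -(2 * μ i0 * t) by ring, e2, e1, Finset.mul_sum]
    congr 1
    refine Finset.sum_congr rfl fun j _ => ?_
    rw [Finset.mul_sum]
    exact Finset.sum_congr rfl fun k _ => by ring
  have hterm : ∀ j ∈ Finset.univ, ∀ k ∈ (Finset.univ : Finset (Fin n)),
      Tendsto (fun t => (2 * (c j * c k)) * (Real.exp (-(2 * μ i0 * t)) * Pfun (μ j + μ k) t))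
        atTop (nhds (if j = i0 ∧ k = i0 then (c i0)^2 / μ i0 else 0)) := by
    intro j _ k _
    by_cases hjk : j = i0 ∧ k = i0
    · obtain ⟨hj, hk⟩ := hjk
      subst hj; subst hk
      rw [if_pos ⟨rfl, rfl⟩]
      have h2μ : (0:ℝ) < 2 * μ k := by linarith [hμpos k]
      have hlim := (limEqAux h2μ).const_mul (2 * (c k * c k))
      have hv : (c k)^2 / μ k = 2 * (c k * c k) * (1/(2 * μ k)) := by
        field_simp [(hμpos k).ne']
      rw [hv]
      simp only [show μ k + μ k = 2 * μ k from by ring]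
      exact hlim
    · rw [if_neg hjk]
      have hlt2 : μ j + μ k < 2 * μ i0 := by
        rcases not_and_or.mp hjk with hj | hk
        · have := hlt j hj; have := hle k; linarith
        · have := hlt k hk; have := hle j; linarith
      have hne : μ j + μ k ≠ 0 := by
        have := hμpos j; have := hμpos k; positivity
      have := (limLtAux hne hlt2 (by linarith [hμpos i0])).const_mul (2 * (c j * c k))
      simpa using this
  have hsum : Tendsto (fun t => Real.exp (-(2 * μ i0)*t) +
        ∑ j, ∑ k, (2 * (c j * c k)) * (Real.exp (-(2 * μ i0 * t)) * Pfun (μ j + μ k) t))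
      atTop (nhds (0 + ∑ j, ∑ k, if j = i0 ∧ k = i0 then (c i0)^2 / μ i0 else 0)) := by
    apply Tendsto.add (exp_lim_neg (by linarith [hμpos i0]))
    apply tendsto_finset_sum
    intro j hj
    exact tendsto_finset_sum _ (fun k hk => hterm j hj k hk)
  have hval : (0:ℝ) + (∑ j, ∑ k, if j = i0 ∧ k = i0 then (c i0)^2 / μ i0 else 0)
      = (c i0)^2 / μ i0 := by
    simp [ite_and, Finset.sum_ite_eq']
  rw [hval] at hsum
  exact hsum.congr (fun t => (key t).symm)

lemma sqrt_tendsto_atTop : Tendsto Real.sqrt atTop atTop := by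
  apply tendsto_atTop_atTop.mpr
  intro b
  refine ⟨b^2, fun a ha => ?_⟩
  calc b ≤ |b| := le_abs_self b
    _ = Real.sqrt (b^2) := (Real.sqrt_sq_eq_abs b).symm
    _ ≤ Real.sqrt a := Real.sqrt_le_sqrt ha

/-- Global winner-take-all for the `k = 1` 3-uniform system: if
`w_1 > w_i ≥ 0` for all `i ≥ 2` and the trajectory stays strictly positive, then
`z_1(t) → √(1+w_1)` and `z_i(t) → 0` for all `i ≥ 2` as `t → ∞`. -/
theorem stmt_16 (n : ℕ) (hn : 0 < n) (w : Fin n → ℝ)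
    (hw : ∀ i : Fin n, i ≠ ⟨0, hn⟩ → w i < w ⟨0, hn⟩ ∧ 0 ≤ w i)
    (z : ℝ → Fin n → ℝ)
    (hpos : ∀ t ≥ (0 : ℝ), ∀ i, 0 < z t i)
    (hode : ∀ t ≥ (0 : ℝ), ∀ i, HasDerivAt (fun s => z s i)
      (z t i * (1 + w i - (∑ j, z t j) ^ 2)) t) :
    Filter.Tendsto (fun t => z t ⟨0, hn⟩) Filter.atTop
        (nhds (Real.sqrt (1 + w ⟨0, hn⟩))) ∧
      ∀ i : Fin n, i ≠ ⟨0, hn⟩ →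
        Filter.Tendsto (fun t => z t i) Filter.atTop (nhds 0) := by
  classical
  set i0 : Fin n := ⟨0, hn⟩ with hi0def
  set m : Fin n → ℝ := fun i => 1 + w i with hm
  set c : Fin n → ℝ := fun i => z 0 i with hcdef
  have hc : ∀ i, 0 < c i := fun i => hpos 0 le_rfl i
  -- derivative of q_i(s) = z s i * exp(-(m i * s))
  have hq : ∀ t ≥ (0:ℝ), ∀ i, HasDerivAt (fun s => z s i * Real.exp (-(m i * s)))
      (-((∑ j, z t j)^2) * (z t i * Real.exp (-(m i * t)))) t := by
    intro t ht i
    have h1 : HasDerivAt (fun s : ℝ => -(m i * s)) (-(m i)) t := by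
      simpa using ((hasDerivAt_id t).const_mul (m i)).fun_neg
    have hexp := (Real.hasDerivAt_exp (-(m i * t))).comp t h1
    have hmul := (hode t ht i).mul hexp
    refine hmul.congr_deriv ?_
    simp only [Function.comp_apply, hm]
    ring
  -- ratios are constant
  have hratio : ∀ i : Fin n, ∀ t ≥ (0:ℝ),
      z t i * Real.exp (-(m i * t)) / (z t i0 * Real.exp (-(m i0 * t))) = c i / c i0 := by
    intro i t ht
    have hconst := const_of_deriv
      (fun s => z s i * Real.exp (-(m i * s)) / (z s i0 * Real.exp (-(m i0 * s)))) ?_ ht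
    · exact hconst.trans (by simp [hcdef])
    · intro s hs
      have hne : z s i0 * Real.exp (-(m i0 * s)) ≠ 0 :=
        (mul_pos (hpos s hs i0) (Real.exp_pos _)).ne'
      refine ((hq s hs i).div (hq s hs i0) hne).congr_deriv ?_
      rw [div_eq_zero_iff]; left; ring
  set E : ℝ → ℝ := fun s => z s i0 * Real.exp (-(m i0 * s)) / c i0 with hEdef
  have hE0 : E 0 = 1 := by
    simp only [hEdef, mul_zero, neg_zero, Real.exp_zero, mul_one]
    exact div_self (hc i0).ne'
  have hEpos : ∀ t ≥ (0:ℝ), 0 < E t := fun t ht =>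
    div_pos (mul_pos (hpos t ht i0) (Real.exp_pos _)) (hc i0)
  have hzform : ∀ t ≥ (0:ℝ), ∀ i, z t i = c i * Real.exp (m i * t) * E t := by
    intro t ht i
    have h := hratio i t ht
    have hne : z t i0 * Real.exp (-(m i0 * t)) ≠ 0 :=
      (mul_pos (hpos t ht i0) (Real.exp_pos _)).ne'
    rw [div_eq_div_iff hne (hc i0).ne'] at h
    have hee : Real.exp (m i * t) * Real.exp (-(m i * t)) = 1 := by
      rw [← Real.exp_add]; simp
    calc z t i = z t i * (Real.exp (m i * t) * Real.exp (-(m i * t))) := by rw [hee, mul_one]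
      _ = (z t i * Real.exp (-(m i * t)) * c i0) * Real.exp (m i * t) / c i0 := by
            rw [eq_div_iff (hc i0).ne']; ring
      _ = (c i * (z t i0 * Real.exp (-(m i0 * t)))) * Real.exp (m i * t) / c i0 := by rw [h]
      _ = c i * Real.exp (m i * t) * E t := by simp only [hEdef]; ring
  -- derivative of E
  have hE' : ∀ t ≥ (0:ℝ), HasDerivAt E
      (-((∑ j, c j * Real.exp (m j * t))^2 * (E t)^3)) t := by
    intro t ht
    have hS : ∑ j, z t j = (∑ j, c j * Real.exp (m j * t)) * E t := by
      rw [Finset.sum_mul]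
      exact Finset.sum_congr rfl fun j _ => hzform t ht j
    have hEt : z t i0 * Real.exp (-(m i0 * t)) / c i0 = E t := rfl
    refine ((hq t ht i0).div_const (c i0)).congr_deriv ?_
    rw [mul_div_assoc, hEt, hS]
    ring
  -- F = (E^2)⁻¹ satisfies F = 1 + 2G
  have hF' : ∀ t ≥ (0:ℝ), HasDerivAt (fun s => ((E s)^2)⁻¹ - 2 * Gfun n c m s) 0 t := by
    intro t ht
    have h1 := (hE' t ht).pow 2
    have h2 := h1.inv (pow_ne_zero 2 (hEpos t ht).ne')
    have h3 := (hasDerivAt_Gfun n c m t).const_mul 2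
    refine (h2.sub h3).congr_deriv ?_
    have hne := (hEpos t ht).ne'
    simp only [Pi.pow_apply]
    push_cast
    field_simp
    simp only [mul_comm t]
    ring
  have hFval : ∀ t ≥ (0:ℝ), ((E t)^2)⁻¹ = 1 + 2 * Gfun n c m t := by
    intro t ht
    have h := const_of_deriv _ hF' ht
    rw [hE0, Gfun_zero] at h
    norm_num at h
    linarith
  have hsqrtE : ∀ t ≥ (0:ℝ), Real.sqrt (1 + 2 * Gfun n c m t) = (E t)⁻¹ := by
    intro t ht
    rw [← hFval t ht, ← inv_pow, Real.sqrt_sq (inv_nonneg.mpr (hEpos t ht).le)]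
  have hz0form : ∀ t ≥ (0:ℝ),
      z t i0 = c i0 * Real.exp (m i0 * t) / Real.sqrt (1 + 2 * Gfun n c m t) := by
    intro t ht
    rw [hsqrtE t ht, div_inv_eq_mul]
    exact hzform t ht i0
  by_cases hμ1 : 0 < m i0
  · -- main case
    have hμpos : ∀ j, 0 < m j := by
      intro j; by_cases hj : j = i0
      · rw [hj]; exact hμ1
      · have := (hw j hj).2
        show (0:ℝ) < 1 + w j
        linarith
    have hlt : ∀ j, j ≠ i0 → m j < m i0 := by
      intro j hj; have := (hw j hj).1
      show (1:ℝ) + w j < 1 + w i0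
      linarith
    have hmain := tendsto_main n c m i0 hc hμpos hlt
    have hL : (0:ℝ) < (c i0)^2 / m i0 := div_pos (pow_pos (hc i0) 2) hμ1
    have hsqL : Real.sqrt ((c i0)^2 / m i0) ≠ 0 := (Real.sqrt_pos.mpr hL).ne'
    have hzlim : Filter.Tendsto (fun t => z t i0) Filter.atTop (nhds (Real.sqrt (m i0))) := by
      have h1 : Filter.Tendsto
          (fun t => c i0 / Real.sqrt (Real.exp (-(2 * m i0 * t)) * (1 + 2 * Gfun n c m t)))
          Filter.atTop (nhds (c i0 / Real.sqrt ((c i0)^2 / m i0))) :=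
        tendsto_const_nhds.div ((Real.continuous_sqrt.tendsto _).comp hmain) hsqL
      have hval : c i0 / Real.sqrt ((c i0)^2 / m i0) = Real.sqrt (m i0) := by
        rw [Real.sqrt_div (sq_nonneg _), Real.sqrt_sq (hc i0).le]
        rw [div_div_eq_mul_div, mul_comm, mul_div_assoc, div_self (hc i0).ne', mul_one]
      rw [hval] at h1
      refine Filter.Tendsto.congr' ?_ h1
      filter_upwards [eventually_ge_atTop (0:ℝ)] with t ht
      rw [hz0form t ht]
      have he2 : Real.exp (-(2 * m i0 * t)) = (Real.exp (-(m i0 * t)))^2 := by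
        rw [show -(2 * m i0 * t) = -(m i0 * t) + -(m i0 * t) by ring, Real.exp_add, sq]
      rw [he2, Real.sqrt_mul (sq_nonneg _), Real.sqrt_sq (Real.exp_pos _).le]
      rw [div_mul_eq_div_div, Real.exp_neg, div_inv_eq_mul]
    constructor
    · have hmeq : m i0 = 1 + w i0 := rfl
      rwa [hmeq] at hzlim
    · intro i hi
      have hneg : m i - m i0 < 0 := by have := hlt i hi; linarith
      have h2 : Filter.Tendsto (fun t => c i * z t i0 * Real.exp ((m i - m i0)*t) / c i0)
          Filter.atTop (nhds 0) := by
        have h3 := (((hzlim.const_mul (c i)).mul (exp_lim_neg hneg)).div_const (c i0))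
        simpa using h3
      refine Filter.Tendsto.congr' ?_ h2
      filter_upwards [eventually_ge_atTop (0:ℝ)] with t ht
      have hne : z t i0 * Real.exp (-(m i0 * t)) ≠ 0 :=
        (mul_pos (hpos t ht i0) (Real.exp_pos _)).ne'
      have hcross := hratio i t ht
      rw [div_eq_div_iff hne (hc i0).ne'] at hcross
      rw [show (m i - m i0)*t = -(m i0 * t) + (m i * t) by ring, Real.exp_add]
      rw [div_eq_iff (hc i0).ne']
      have hee : Real.exp (-(m i * t)) * Real.exp (m i * t) = 1 := by
        rw [← Real.exp_add]; simp
      linear_combination (-(Real.exp (m i * t))) * hcross + (z t i * c i0) * hee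
  · -- degenerate case m i0 ≤ 0 (only possible when n = 1)
    push_neg at hμ1
    have hnoi : ∀ i : Fin n, i ≠ i0 → False := by
      intro i hi
      have h1 := (hw i hi).1
      have h2 := (hw i hi).2
      have h3 : (0:ℝ) < m i0 := by
        show (0:ℝ) < 1 + w i0
        linarith
      linarith
    have hGnn : ∀ t ≥ (0:ℝ), 0 ≤ Gfun n c m t :=
      fun t ht => Gfun_nonneg n c m (fun i => (hc i).le) ht
    have hone_le : ∀ t ≥ (0:ℝ), 1 ≤ Real.sqrt (1 + 2 * Gfun n c m t) := by
      intro t ht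
      have h := Real.sqrt_le_sqrt (show (1:ℝ) ≤ 1 + 2 * Gfun n c m t by linarith [hGnn t ht])
      simpa using h
    have hz0 : Filter.Tendsto (fun t => z t i0) Filter.atTop (nhds 0) := by
      rcases lt_or_eq_of_le hμ1 with hlt' | heq
      · -- m i0 < 0
        apply tendsto_of_tendsto_of_tendsto_of_le_of_le' tendsto_const_nhds
          (show Filter.Tendsto (fun t => c i0 * Real.exp (m i0 * t)) Filter.atTop (nhds 0) by
            simpa using (exp_lim_neg hlt').const_mul (c i0))
        · filter_upwards [eventually_ge_atTop (0:ℝ)] with t ht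
          exact (hpos t ht i0).le
        · filter_upwards [eventually_ge_atTop (0:ℝ)] with t ht
          rw [hz0form t ht]
          exact div_le_self (mul_pos (hc i0) (Real.exp_pos _)).le (hone_le t ht)
      · -- heq : m i0 = 0
        have hGge : ∀ t ≥ (0:ℝ), (c i0)^2 * t ≤ Gfun n c m t := by
          intro t ht
          have hnn : ∀ j ∈ Finset.univ, (0:ℝ) ≤ ∑ k, c j * c k * Pfun (m j + m k) t :=
            fun j _ => Finset.sum_nonneg fun k _ =>
              mul_nonneg (mul_nonneg (hc j).le (hc k).le) (Pfun_nonneg _ ht)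
          have h1 := Finset.single_le_sum hnn (Finset.mem_univ i0)
          have hnn2 : ∀ k ∈ Finset.univ, (0:ℝ) ≤ c i0 * c k * Pfun (m i0 + m k) t :=
            fun k _ => mul_nonneg (mul_nonneg (hc i0).le (hc k).le) (Pfun_nonneg _ ht)
          have h2 := Finset.single_le_sum hnn2 (Finset.mem_univ i0)
          have h3 : Pfun (m i0 + m i0) t = t := by rw [heq]; simp [Pfun]
          have h4 : (c i0)^2 * t = c i0 * c i0 * Pfun (m i0 + m i0) t := by rw [h3]; ring
          show (c i0)^2 * t ≤ ∑ j, ∑ k, c j * c k * Pfun (m j + m k) t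
          rw [h4]
          exact h2.trans h1
        have hc2 : (0:ℝ) < 2 * (c i0)^2 := by
          have := hc i0; positivity
        have hden : Filter.Tendsto (fun t : ℝ => 1 + 2 * (c i0)^2 * t)
            Filter.atTop Filter.atTop := by
          apply tendsto_atTop_add_const_left
          exact Tendsto.const_mul_atTop hc2 tendsto_id
        have hupper : Filter.Tendsto (fun t => c i0 / Real.sqrt (1 + 2 * (c i0)^2 * t))
            Filter.atTop (nhds 0) :=
          Filter.Tendsto.div_atTop tendsto_const_nhds (sqrt_tendsto_atTop.comp hden)
        apply tendsto_of_tendsto_of_tendsto_of_le_of_le' tendsto_const_nhds hupper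
        · filter_upwards [eventually_ge_atTop (0:ℝ)] with t ht using (hpos t ht i0).le
        · filter_upwards [eventually_ge_atTop (0:ℝ)] with t ht
          rw [hz0form t ht, heq]
          simp only [zero_mul, Real.exp_zero, mul_one]
          have hbpos : (0:ℝ) < Real.sqrt (1 + 2 * (c i0)^2 * t) :=
            Real.sqrt_pos.mpr (by nlinarith [sq_nonneg (c i0)])
          refine div_le_div_of_nonneg_left (hc i0).le hbpos ?_
          apply Real.sqrt_le_sqrt
          have := hGge t ht
          linarith
    constructor
    · have hsq0 : Real.sqrt (1 + w i0) = 0 := by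
        apply Real.sqrt_eq_zero_of_nonpos
        have hmeq : m i0 = 1 + w i0 := rfl
        linarith [hmeq ▸ hμ1]
      rw [hsq0]
      exact hz0
    · intro i hi
      exact (hnoi i hi).elim
end

section
/- Let n ≥ 1, let 0 < k < 1, let p ≥ 2 be an integer (p = t − 1 for interaction order t ≥ 3), and let w ∈ ℝⁿ with w_i ≥ 0 for all i; set b_i = 1 + w_i, b_min = min_i b_i, b_max = max_i b_i. Let D ⊆ {1,…,n} with |D| = d ≥ 1, and suppose k·d^p·(b_max − b_min) < (1−k)·b_min (equivalently, d < ((1−k)·b_min / (k·(b_max − b_min)))^{1/p} when b_max > b_min). Then there exists x ∈ ℝⁿ with x_i > 0 for every i ∈ D, x_i = 0 for every i ∉ D, and k·(∑_{j∈D} x_j)^p + (1−k)·x_i^p = b_i for every i ∈ D; i.e., the arbitrary-order system admits an equilibrium with exactly the winner set D. -/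
/-- Guaranteed existence of an equilibrium with a prescribed winner set `D`
(`|D| = d ≥ 1`) for the arbitrary-order system (`p = t − 1 ≥ 2`) when
`k d^p (b_max − b_min) < (1−k) b_min`, where `b_i = 1 + w_i`. -/
theorem stmt_18 (n p : ℕ) (hn : 1 ≤ n) (hp : 2 ≤ p) (k : ℝ) (hk0 : 0 < k) (hk1 : k < 1)
    (w : Fin n → ℝ) (hw : ∀ i, 0 ≤ w i)
    (bmin bmax : ℝ)
    (hbmin : IsLeast (Set.range fun i => 1 + w i) bmin)
    (hbmax : IsGreatest (Set.range fun i => 1 + w i) bmax)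
    (D : Finset (Fin n)) (hD : 1 ≤ D.card)
    (hcond : k * (D.card : ℝ) ^ p * (bmax - bmin) < (1 - k) * bmin) :
    ∃ x : Fin n → ℝ, (∀ i ∈ D, 0 < x i) ∧ (∀ i ∉ D, x i = 0) ∧
      ∀ i ∈ D, k * (∑ j ∈ D, x j) ^ p + (1 - k) * x i ^ p = 1 + w i := by
  have hk1' : 0 < 1 - k := by linarith
  have hp0 : p ≠ 0 := by omega
  obtain ⟨i₀, hi₀⟩ := hbmin.1
  have hbmin_lb : ∀ i, bmin ≤ 1 + w i := fun i => hbmin.2 ⟨i, rfl⟩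
  have hbmax_ub : ∀ i, 1 + w i ≤ bmax := fun i => hbmax.2 ⟨i, rfl⟩
  have hi₀' : 1 + w i₀ = bmin := hi₀
  have hbmin_pos : 0 < bmin := by
    have := hw i₀; linarith
  have hminmax : bmin ≤ bmax := le_trans (hbmin_lb i₀) (hbmax_ub i₀)
  have hbmax_pos : 0 < bmax := lt_of_lt_of_le hbmin_pos hminmax
  set d : ℝ := (D.card : ℝ) with hd_def
  have hd1 : (1 : ℝ) ≤ d := by rw [hd_def]; exact_mod_cast hD
  have hdp1 : (1 : ℝ) ≤ d ^ p := one_le_pow₀ hd1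
  have hdp_pos : (0 : ℝ) < d ^ p := by linarith
  have hden_pos : (0 : ℝ) < (1 - k) + k * d ^ p := add_pos hk1' (mul_pos hk0 hdp_pos)
  set C : ℝ := (d ^ p * bmax / ((1 - k) + k * d ^ p) + bmin / k) / 2 with hC_def
  have hAB : d ^ p * bmax / ((1 - k) + k * d ^ p) < bmin / k := by
    rw [div_lt_div_iff₀ hden_pos hk0]
    nlinarith
  have hCA : d ^ p * bmax / ((1 - k) + k * d ^ p) < C := by
    rw [hC_def]; linarith
  have hCB : C < bmin / k := by rw [hC_def]; linarith
  have hC_pos : 0 < C := by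
    have hA : 0 < d ^ p * bmax / ((1 - k) + k * d ^ p) := div_pos (mul_pos hdp_pos hbmax_pos) hden_pos
    linarith
  have hkC : k * C < bmin := by
    rw [← lt_div_iff₀' hk0]; exact hCB
  have hdC : d ^ p * (bmax - k * C) < (1 - k) * C := by
    rw [div_lt_iff₀ hden_pos] at hCA
    nlinarith
  set M : ℝ := C ^ ((p : ℝ)⁻¹) with hM_def
  have hM_pos : 0 < M := Real.rpow_pos_of_pos hC_pos _
  have hMp : M ^ p = C := Real.rpow_inv_natCast_pow hC_pos.le hp0
  have hDne : D.Nonempty := Finset.card_pos.mp hD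
  set f : ℝ → ℝ := fun S => ∑ j ∈ D, ((1 + w j - k * S ^ p) / (1 - k)) ^ ((p : ℝ)⁻¹)
    with hf_def
  have hrpow_cont : Continuous fun x : ℝ => x ^ ((p : ℝ)⁻¹) := by
    rw [continuous_iff_continuousAt]
    intro x
    exact Real.continuousAt_rpow_const x _ (Or.inr (by positivity))
  have hf_cont : Continuous f := by
    apply continuous_finset_sum
    intro j _
    exact hrpow_cont.comp
      ((continuous_const.sub (continuous_const.mul (continuous_pow p))).div_const _)
  have hf0 : 0 < f 0 := by
    apply Finset.sum_pos _ hDne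
    intro j hj
    apply Real.rpow_pos_of_pos
    have := hbmin_lb j
    have : 0 < 1 + w j - k * 0 ^ p := by
      rw [zero_pow hp0]; linarith
    positivity
  have hfM : f M < M := by
    have hbase_bound : ∀ j ∈ D,
        ((1 + w j - k * M ^ p) / (1 - k)) ^ ((p : ℝ)⁻¹)
          ≤ ((bmax - k * C) / (1 - k)) ^ ((p : ℝ)⁻¹) := by
      intro j hj
      apply Real.rpow_le_rpow
      · rw [hMp]
        have h1 : 0 ≤ 1 + w j - k * C := by have := hbmin_lb j; linarith
        positivity
      · rw [hMp]
        gcongr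
        have := hbmax_ub j; linarith
      · positivity
    have hsum : f M ≤ d * ((bmax - k * C) / (1 - k)) ^ ((p : ℝ)⁻¹) := by
      calc f M ≤ ∑ _j ∈ D, ((bmax - k * C) / (1 - k)) ^ ((p : ℝ)⁻¹) :=
            Finset.sum_le_sum hbase_bound
        _ = d * ((bmax - k * C) / (1 - k)) ^ ((p : ℝ)⁻¹) := by
            rw [Finset.sum_const, nsmul_eq_mul]
    have hy_nonneg : 0 ≤ (bmax - k * C) / (1 - k) := by
      have h2 : 0 ≤ bmax - k * C := by nlinarith [lt_of_lt_of_le hkC hminmax]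
      positivity
    have hdmul : d * ((bmax - k * C) / (1 - k)) ^ ((p : ℝ)⁻¹)
        = (d ^ p * ((bmax - k * C) / (1 - k))) ^ ((p : ℝ)⁻¹) := by
      rw [Real.mul_rpow (by linarith) hy_nonneg]
      congr 1
      rw [← Real.rpow_natCast d p, ← Real.rpow_mul (by linarith : (0:ℝ) ≤ d)]
      rw [mul_inv_cancel₀ (by exact_mod_cast hp0 : (p:ℝ) ≠ 0), Real.rpow_one]
    have hlt : d ^ p * ((bmax - k * C) / (1 - k)) < C := by
      rw [← mul_div_assoc, div_lt_iff₀ hk1']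
      nlinarith
    calc f M ≤ d * ((bmax - k * C) / (1 - k)) ^ ((p : ℝ)⁻¹) := hsum
      _ = (d ^ p * ((bmax - k * C) / (1 - k))) ^ ((p : ℝ)⁻¹) := hdmul
      _ < C ^ ((p : ℝ)⁻¹) := Real.rpow_lt_rpow (mul_nonneg hdp_pos.le hy_nonneg) hlt (by positivity)
      _ = M := rfl
  -- IVT
  have hcont : ContinuousOn (fun S => f S - S) (Set.Icc 0 M) :=
    (hf_cont.sub continuous_id).continuousOn
  have hmem : (0 : ℝ) ∈ Set.Ioo (f M - M) (f 0 - 0) := ⟨by linarith, by linarith⟩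
  obtain ⟨S, hS_mem, hS_eq⟩ := intermediate_value_Ioo' hM_pos.le hcont hmem
  have hS0 : 0 < S := hS_mem.1
  have hSM : S < M := hS_mem.2
  have hfS : f S = S := by
    have : f S - S = 0 := hS_eq
    linarith
  have hSp_lt : S ^ p < C := by
    calc S ^ p < M ^ p := pow_lt_pow_left₀ hSM hS0.le hp0
      _ = C := hMp
  have hbase_pos : ∀ i, 0 < (1 + w i - k * S ^ p) / (1 - k) := by
    intro i
    have h1 : k * S ^ p < k * C := by
      exact mul_lt_mul_of_pos_left hSp_lt hk0
    have := hbmin_lb i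
    have : 0 < 1 + w i - k * S ^ p := by linarith
    positivity
  refine ⟨fun i => if i ∈ D then ((1 + w i - k * S ^ p) / (1 - k)) ^ ((p : ℝ)⁻¹) else 0,
    ?_, ?_, ?_⟩
  · intro i hi
    simp only [if_pos hi]
    exact Real.rpow_pos_of_pos (hbase_pos i) _
  · intro i hi
    simp only [if_neg hi]
  · intro i hi
    have hsum : (∑ j ∈ D, if j ∈ D then ((1 + w j - k * S ^ p) / (1 - k)) ^ ((p : ℝ)⁻¹)
        else 0) = S := by
      have h1 : (∑ j ∈ D, if j ∈ D then ((1 + w j - k * S ^ p) / (1 - k)) ^ ((p : ℝ)⁻¹)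
          else 0) = ∑ j ∈ D, ((1 + w j - k * S ^ p) / (1 - k)) ^ ((p : ℝ)⁻¹) :=
        Finset.sum_congr rfl fun j hj => if_pos hj
      rw [h1]; exact hfS
    simp only []
    rw [hsum, if_pos hi]
    rw [← Real.rpow_natCast (((1 + w i - k * S ^ p) / (1 - k)) ^ ((p : ℝ)⁻¹)) p]
    rw [← Real.rpow_mul (hbase_pos i).le, inv_mul_cancel₀
      (by exact_mod_cast hp0 : (p:ℝ) ≠ 0), Real.rpow_one]
    field_simp
    ring
end
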